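/- arXiv:1509.02478 — 5 statements merged into one kernel-verified Lean document; each statement's English description precedes it below -/
import Mathlib

section
/- For any finite tree with n edges, the (single-stepped) Green walk around the tree is a single closed walk of length 2n; that is, it traverses each side (half-edge) of each edge exactly once before returning to its start. -/
/-!
A ribbon graph is encoded as a combinatorial map on a finite set `H` of half-edges:
`sigma` is the fixed-point-free involution pairing the two half-edges of each edge,
and `rho` is the permutation whose cycles are the cyclic orderings of the half-edges
around each vertex.  Edges are the orbits of `sigma`, vertices the orbits of `rho`.
The Green walk step sends a half-edge `x` at a vertex `v` to the half-edge `y`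
whose opposite half-edge is the successor `rho x` of `x` at `v`, i.e. `y = sigma (rho x)`.
-/

structure RibbonGraph (H : Type) where
  sigma : Equiv.Perm H
  rho : Equiv.Perm H
  invol : ∀ x, sigma (sigma x) = x
  noFix : ∀ x, sigma x ≠ x
  conn : ∀ x y, Relation.EqvGen (fun a b => sigma a = b ∨ rho a = b) x y

/-- The orbit ("same cycle") setoid of a permutation. -/
def sameCycleSetoid {H : Type} (π : Equiv.Perm H) : Setoid H :=
  ⟨π.SameCycle, ⟨fun x => Equiv.Perm.SameCycle.refl π x, fun h => h.symm,
    fun h₁ h₂ => h₁.trans h₂⟩⟩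

namespace RibbonGraph

variable {H : Type}

/-- The step map of the (anticlockwise) Green walk: `x ↦ sigma (rho x)`. -/
def step (G : RibbonGraph H) : Equiv.Perm H := G.rho.trans G.sigma

/-- The step map of the clockwise Green walk: `x ↦ sigma (rho⁻¹ x)`. -/
def stepC (G : RibbonGraph H) : Equiv.Perm H := G.rho.symm.trans G.sigma

/-- The number of edges: the number of orbits of the involution `sigma`. -/
noncomputable def numEdges (G : RibbonGraph H) : ℕ := Nat.card (Quotient (sameCycleSetoid G.sigma))

/-- The number of vertices: the number of orbits of `rho`. -/
noncomputable def numVertices (G : RibbonGraph H) : ℕ := Nat.card (Quotient (sameCycleSetoid G.rho))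

/-- A (connected) ribbon graph is a tree when `#vertices = #edges + 1`. -/
def IsTree (G : RibbonGraph H) : Prop := G.numVertices = G.numEdges + 1

/-- A half-edge `x` spans a bridge if its edge `{x, sigma x}` disconnects the graph:
there is no walk from `x` to `sigma x` avoiding that edge. -/
def IsBridge (G : RibbonGraph H) (x₀ : H) : Prop :=
  ¬ Relation.ReflTransGen
      (fun a b => G.rho a = b ∨ G.rho b = a ∨ (G.sigma a = b ∧ a ≠ x₀ ∧ a ≠ G.sigma x₀))
      x₀ (G.sigma x₀)

end RibbonGraph

/-!
For permutations `f, g` of a finite set `X`, write `c` for the number of cycles and `k` for the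
number of orbits of `⟨f, g⟩`. Then `c f + c g + c (f * g) ≤ |X| + 2 k` (the genus of a map is
nonnegative). By induction on `|X| - c f`: if `f a ≠ a`, then `f = τ * f'` with `τ = swap a (f a)`
and `c f' = c f + 1`; multiplying `f' * g` by `τ` splits or merges a cycle, and in the merging case
`k` can drop by at most one.

For a tree with `n` edges, `σ` has `n` cycles, all of length two, `ρ` has `n + 1` cycles and there
is one orbit, so the Green walk `σ * ρ` has at most one cycle, which therefore passes through all
`2 n` half-edges.
-/

open Equiv.Perm Function

namespace Setoid

variable {X : Type*}

def mergeClasses (r : Setoid X) (a b : X) : Setoid X where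
  r x y := r x y ∨ (r x a ∧ r b y) ∨ (r x b ∧ r a y)
  iseqv := ⟨fun x => .inl (r.refl' x), fun h => by grind [Setoid.symm'],
    fun h h' => by grind [Setoid.symm', Setoid.trans']⟩

variable {r t : Setoid X} {a b : X}

theorem le_mergeClasses (r : Setoid X) (a b : X) : r ≤ r.mergeClasses a b :=
  fun _ _ => .inl

theorem mergeClasses_mono (h : r ≤ t) : r.mergeClasses a b ≤ t.mergeClasses a b := by
  rintro x y (hxy | ⟨hx, hy⟩ | ⟨hx, hy⟩)
  exacts [.inl (h hxy), .inr (.inl ⟨h hx, h hy⟩), .inr (.inr ⟨h hx, h hy⟩)]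

theorem mergeClasses_le_of_rel (hab : r a b) : r.mergeClasses a b ≤ r := by
  rintro x y (hxy | ⟨hx, hy⟩ | ⟨hx, hy⟩)
  exacts [hxy, r.trans' (r.trans' hx hab) hy, r.trans' (r.trans' hx (r.symm' hab)) hy]

theorem map_of_le_surjective (h : r ≤ t) : Surjective (map_of_le h) :=
  Quotient.ind fun x => ⟨Quotient.mk r x, rfl⟩

variable [Finite X]

theorem card_quotient_le_of_le (h : r ≤ t) : Nat.card (Quotient t) ≤ Nat.card (Quotient r) :=
  Nat.card_le_card_of_surjective _ (map_of_le_surjective h)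

theorem card_quotient_lt_of_le (h : r ≤ t) (ht : t a b) (hr : ¬ r a b) :
    Nat.card (Quotient t) < Nat.card (Quotient r) := by
  have := Fintype.ofFinite (Quotient r)
  have := Fintype.ofFinite (Quotient t)
  simp only [Nat.card_eq_fintype_card]
  refine Fintype.card_lt_of_surjective_not_injective _ (map_of_le_surjective h) fun hinj => hr ?_
  exact Quotient.exact (hinj (Quotient.sound ht : Quotient.mk t a = Quotient.mk t b))

theorem card_quotient_le_card_quotient_add_one (h : r ≤ t) (ht : t ≤ r.mergeClasses a b) :
    Nat.card (Quotient r) ≤ Nat.card (Quotient t) + 1 := by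
  have hinj : Set.InjOn (map_of_le h) (Set.univ \ {Quotient.mk r a}) := by
    rintro ⟨x⟩ ⟨-, hx⟩ ⟨y⟩ ⟨-, hy⟩ hxy
    rcases ht (Quotient.exact hxy) with hxy | ⟨hxa, -⟩ | ⟨-, hay⟩
    · exact Quotient.sound hxy
    · exact absurd (Quotient.sound hxa) hx
    · exact absurd (Quotient.sound hay).symm hy
  have hle := Set.ncard_le_ncard_of_injOn _ (fun _ _ => Set.mem_univ _) hinj
  rw [← Set.ncard_univ, ← Set.ncard_univ, ← Set.ncard_sdiff_singleton_add_one (Set.mem_univ _)]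
  exact Nat.add_le_add_right hle 1

end Setoid

namespace Equiv.Perm

variable {X : Type*} {f : Perm X} {a b : X}

noncomputable def numCycles (f : Perm X) : ℕ := Nat.card (Quotient (SameCycle.setoid f))

def jointOrbits (f g : Perm X) : Setoid X := SameCycle.setoid f ⊔ SameCycle.setoid g

noncomputable def numJointOrbits (f g : Perm X) : ℕ := Nat.card (Quotient (jointOrbits f g))

theorem sameCycle_setoid_le {s : Setoid X} (hf : ∀ x, s x (f x)) : SameCycle.setoid f ≤ s := by
  have hinv : ∀ x, s x (f⁻¹ x) := fun x => s.symm' (by simpa using hf (f⁻¹ x))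
  suffices h : ∀ (k : ℤ) x, s x ((f ^ k) x) by rintro x _ ⟨k, rfl⟩; exact h k x
  intro k
  induction k using Int.induction_on with
  | zero => exact s.refl'
  | succ k ih => intro x; rw [zpow_add_one, mul_apply]; exact s.trans' (hf x) (ih _)
  | pred k ih => intro x; rw [zpow_sub_one, mul_apply]; exact s.trans' (hinv x) (ih _)

theorem sameCycle_mul_le_jointOrbits (f g : Perm X) :
    SameCycle.setoid (f * g) ≤ jointOrbits f g :=
  sameCycle_setoid_le fun x => (jointOrbits f g).trans'
    (le_sup_right (a := SameCycle.setoid f) (SameCycle.refl g x).apply_right)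
    (le_sup_left (b := SameCycle.setoid g) (SameCycle.refl f (g x)).apply_right)

theorem sameCycle_setoid_one : SameCycle.setoid (1 : Perm X) = ⊥ :=
  Setoid.ext fun _ _ => sameCycle_one

theorem numCycles_one : numCycles (1 : Perm X) = Nat.card X := by
  rw [numCycles, sameCycle_setoid_one, Nat.card_congr Setoid.quotientBotEquiv]

theorem numCycles_le_card [Finite X] (f : Perm X) : numCycles f ≤ Nat.card X :=
  (Setoid.card_quotient_le_of_le bot_le).trans_eq (Nat.card_congr Setoid.quotientBotEquiv)

section swap

variable [DecidableEq X]

theorem sameCycle_swap_mul_le_mergeClasses (f : Perm X) (a b : X) :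
    SameCycle.setoid (swap a b * f) ≤ (SameCycle.setoid f).mergeClasses a b := by
  refine sameCycle_setoid_le fun x => ?_
  have hx : f.SameCycle x (f x) := .apply_right (.refl f x)
  rw [mul_apply]
  by_cases ha : f x = a
  · rw [ha, swap_apply_left]
    exact .inr (.inl ⟨ha ▸ hx, .refl f b⟩)
  by_cases hb : f x = b
  · rw [hb, swap_apply_right]
    exact .inr (.inr ⟨hb ▸ hx, .refl f a⟩)
  rw [swap_apply_of_ne_of_ne ha hb]
  exact .inl hx

theorem sameCycle_le_mergeClasses_swap_mul (f : Perm X) (a b : X) :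
    SameCycle.setoid f ≤ (SameCycle.setoid (swap a b * f)).mergeClasses a b := by
  simpa only [swap_mul_self_mul] using sameCycle_swap_mul_le_mergeClasses (swap a b * f) a b

-- Along the `f`-cycle of `b`, which avoids `a`, `swap a b * f` agrees with `f` until the cycle
-- closes up at `b`, and there it turns to `a` instead.
theorem sameCycle_swap_mul_of_not_sameCycle [Finite X] (h : ¬ f.SameCycle a b) :
    (swap a b * f).SameCycle b a := by
  have hpos : 0 < minimalPeriod f b :=
    minimalPeriod_pos_of_mem_periodicPts (f.injective.mem_periodicPts b)
  have hne : ∀ i, f^[i] b ≠ a := fun i he =>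
    h (he ▸ sameCycle_pow_right.mpr (.refl f b) : f.SameCycle b a).symm
  have hagree : ∀ i < minimalPeriod f b, (swap a b * f)^[i] b = f^[i] b := by
    intro i
    induction i with
    | zero => intro; rfl
    | succ i ih =>
      intro hi
      rw [iterate_succ_apply', iterate_succ_apply', ih (by omega), mul_apply,
        ← iterate_succ_apply' f]
      exact swap_apply_of_ne_of_ne (hne _)
        (not_isPeriodicPt_of_pos_of_lt_minimalPeriod i.succ_ne_zero hi)
  obtain ⟨j, hj⟩ := Nat.exists_eq_add_one_of_ne_zero hpos.ne'
  refine ⟨minimalPeriod f b, ?_⟩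
  rw [zpow_natCast, ← iterate_eq_pow, hj, iterate_succ_apply', hagree j (by omega), mul_apply,
    ← iterate_succ_apply' f, Nat.succ_eq_add_one, ← hj, iterate_minimalPeriod, swap_apply_right]

theorem numCycles_swap_mul_le [Finite X] (h : f.SameCycle a b) :
    numCycles (swap a b * f) ≤ numCycles f + 1 :=
  Setoid.card_quotient_le_card_quotient_add_one
    ((sameCycle_swap_mul_le_mergeClasses f a b).trans (Setoid.mergeClasses_le_of_rel h))
    (sameCycle_le_mergeClasses_swap_mul f a b)

theorem numCycles_swap_mul_add_one_le [Finite X] (h : ¬ f.SameCycle a b) :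
    numCycles (swap a b * f) + 1 ≤ numCycles f := by
  have hba := sameCycle_swap_mul_of_not_sameCycle h
  exact Setoid.card_quotient_lt_of_le ((sameCycle_le_mergeClasses_swap_mul f a b).trans
    (Setoid.mergeClasses_le_of_rel hba.symm)) hba.symm h

theorem jointOrbits_swap_mul_le (h : f.SameCycle a b) (g : Perm X) :
    jointOrbits (swap a b * f) g ≤ jointOrbits f g :=
  sup_le_sup_right ((sameCycle_swap_mul_le_mergeClasses f a b).trans
    (Setoid.mergeClasses_le_of_rel h)) _

theorem jointOrbits_le_mergeClasses_swap_mul (f g : Perm X) (a b : X) :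
    jointOrbits f g ≤ (jointOrbits (swap a b * f) g).mergeClasses a b :=
  sup_le ((sameCycle_le_mergeClasses_swap_mul f a b).trans (Setoid.mergeClasses_mono le_sup_left))
    (le_sup_right.trans (Setoid.le_mergeClasses _ a b))

end swap

theorem numCycles_add_numCycles_add_numCycles_mul_le [Finite X] (f g : Perm X) :
    numCycles f + numCycles g + numCycles (f * g) ≤ Nat.card X + 2 * numJointOrbits f g := by
  classical
  by_cases h1 : f = 1
  · subst h1
    have hg : numJointOrbits 1 g = numCycles g := by
      rw [numJointOrbits, jointOrbits, sameCycle_setoid_one, bot_sup_eq, numCycles]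
    rw [hg, numCycles_one, one_mul]
    omega
  obtain ⟨a, ha⟩ : ∃ a, f a ≠ a := by
    by_contra! h
    exact h1 (ext h)
  obtain ⟨f', hf'⟩ : ∃ f', f' = swap a (f a) * f := ⟨_, rfl⟩
  have hfa : f.SameCycle a (f a) := .apply_right (.refl f a)
  have hf'a : ¬ f'.SameCycle a (f a) := fun h =>
    ha (h.eq_of_left (by rw [hf']; exact swap_apply_right a (f a))).symm
  have hcyc : numCycles f' = numCycles f + 1 := by
    refine le_antisymm (hf' ▸ numCycles_swap_mul_le hfa) ?_
    simpa only [hf', swap_mul_self_mul] using numCycles_swap_mul_add_one_le hf'a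
  have hJ : jointOrbits f' g ≤ jointOrbits f g := hf' ▸ jointOrbits_swap_mul_le hfa g
  have hJ' : jointOrbits f g ≤ (jointOrbits f' g).mergeClasses a (f a) :=
    hf' ▸ jointOrbits_le_mergeClasses_swap_mul f g a (f a)
  have ih := numCycles_add_numCycles_add_numCycles_mul_le f' g
  have hmul : f * g = swap a (f a) * (f' * g) := by rw [hf', ← mul_assoc, swap_mul_self_mul]
  rw [hmul]
  by_cases hsplit : (f' * g).SameCycle a (f a)
  · have := numCycles_swap_mul_le hsplit
    have : numJointOrbits f' g ≤ numJointOrbits f g :=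
      Setoid.card_quotient_le_of_le (hJ'.trans
        (Setoid.mergeClasses_le_of_rel (sameCycle_mul_le_jointOrbits f' g hsplit)))
    omega
  · have := numCycles_swap_mul_add_one_le hsplit
    have : numJointOrbits f' g ≤ numJointOrbits f g + 1 :=
      Setoid.card_quotient_le_card_quotient_add_one hJ hJ'
    omega
termination_by Nat.card X - numCycles f
decreasing_by have := numCycles_le_card f'; omega

theorem sameCycle_iff_of_involutive (hf : Involutive f) {x y : X} :
    f.SameCycle x y ↔ y = x ∨ y = f x := by
  refine ⟨fun h => ?_, ?_⟩
  · have hle : SameCycle.setoid f ≤ Setoid.ker fun x => s(x, f x) :=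
      sameCycle_setoid_le fun x => by simp [Setoid.ker_def, hf x, Sym2.eq_swap]
    obtain ⟨rfl, -⟩ | ⟨-, rfl⟩ := Sym2.eq_iff.mp (hle h)
    exacts [.inl rfl, .inr rfl]
  · rintro (rfl | rfl)
    exacts [.refl f _, .apply_right (.refl f _)]

theorem card_eq_two_mul_numCycles [Finite X] (hf : Involutive f) (hfix : ∀ x, f x ≠ x) :
    Nat.card X = 2 * numCycles f := by
  classical
  have := Fintype.ofFinite X
  rw [numCycles, Nat.card_eq_fintype_card, Nat.card_eq_fintype_card, ← Finset.card_univ,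
    Finset.card_eq_sum_card_fiberwise (f := Quotient.mk (SameCycle.setoid f)) (t := Finset.univ)
      fun _ _ => Finset.mem_univ _, Finset.sum_const_nat (m := 2), Finset.card_univ, mul_comm]
  refine Quotient.ind fun x _ => ?_
  have hfiber : Finset.univ.filter (fun y => Quotient.mk (SameCycle.setoid f) y = Quotient.mk _ x)
      = {x, f x} := by
    ext y
    simp only [Finset.mem_filter, Finset.mem_univ, true_and, Quotient.eq, Finset.mem_insert,
      Finset.mem_singleton]
    exact sameCycle_comm.trans (sameCycle_iff_of_involutive hf)
  rw [hfiber, Finset.card_pair (hfix x).symm]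

theorem sameCycle_of_numCycles_le_one [Finite X] (hf : numCycles f ≤ 1) (x y : X) :
    f.SameCycle x y := by
  have := Finite.card_le_one_iff_subsingleton.mp hf
  exact Quotient.exact (Subsingleton.elim (Quotient.mk (SameCycle.setoid f) x) (Quotient.mk _ y))

theorem minimalPeriod_eq_card_of_forall_sameCycle [Finite X] {x : X}
    (h : ∀ y, f.SameCycle x y) : minimalPeriod f x = Nat.card X := by
  classical
  have := Fintype.ofFinite X
  have horbit : ∀ y, y ∈ MulAction.orbit (Subgroup.zpowers f) x := fun y => by
    obtain ⟨k, rfl⟩ := h y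
    exact ⟨⟨f ^ k, k, rfl⟩, rfl⟩
  change minimalPeriod (f • ·) x = _
  rw [MulAction.minimalPeriod_eq_card, ← Nat.card_eq_fintype_card, Set.eq_univ_of_forall horbit,
    Nat.card_univ]

end Equiv.Perm

namespace RibbonGraph

variable {H : Type}

theorem numJointOrbits_le_one [Finite H] (G : RibbonGraph H) :
    numJointOrbits G.sigma G.rho ≤ 1 := by
  refine Finite.card_le_one_iff_subsingleton.mpr ⟨Quotient.ind₂ fun x y => Quotient.sound ?_⟩
  refine Setoid.eqvGen_le (fun a b hab => ?_) (G.conn x y)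
  rcases hab with rfl | rfl
  exacts [le_sup_left (b := SameCycle.setoid G.rho) (SameCycle.refl _ a).apply_right,
    le_sup_right (a := SameCycle.setoid G.sigma) (SameCycle.refl _ a).apply_right]

end RibbonGraph

theorem tree_green_walk_single_of_length_two_mul_general
    (H : Type) [Fintype H] (G : RibbonGraph H) (n : ℕ)
    (hE : G.numEdges = n) (hTree : G.IsTree) :
    (∀ x y : H, G.step.SameCycle x y) ∧
      (∀ x : H, Function.minimalPeriod (⇑G.step) x = 2 * n) := by
  have hσ : numCycles G.sigma = n := hE
  have hρ : numCycles G.rho = n + 1 := hE ▸ hTree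
  have hcard : Nat.card H = 2 * n := hσ ▸ card_eq_two_mul_numCycles G.invol G.noFix
  have heuler := numCycles_add_numCycles_add_numCycles_mul_le G.sigma G.rho
  have hconn := G.numJointOrbits_le_one
  have hfaces : numCycles G.step ≤ 1 := by
    change numCycles (G.sigma * G.rho) ≤ 1
    omega
  have hsingle := sameCycle_of_numCycles_le_one hfaces
  exact ⟨hsingle, fun x => (minimalPeriod_eq_card_of_forall_sameCycle (hsingle x)).trans hcard⟩

/-- For any finite tree with `n` edges, the Green walk is a single
closed walk of length `2 n`: every half-edge lies on the same Green walk and the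
walk first returns to its start after exactly `2 n` steps (so it traverses each of
the `2 n` half-edges exactly once). -/
theorem tree_green_walk_single_of_length_two_mul
    (H : Type) [Fintype H] [Nonempty H] (G : RibbonGraph H) (n : ℕ)
    (hE : G.numEdges = n) (hTree : G.IsTree) :
    (∀ x y : H, G.step.SameCycle x y) ∧
      (∀ x : H, Function.minimalPeriod (⇑G.step) x = 2 * n) :=
  tree_green_walk_single_of_length_two_mul_general H G n hE hTree
end

section
/- A ribbon graph consisting solely of a single cycle of odd length l has exactly two distinct Green walks (one along each side of the cycle), each of length l, and hence exactly two distinct double-stepped Green walks, each of length l. -/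
/-!
Since `ρ` is an involution, it conjugates the Green step `s = σρ` to `s⁻¹`, so it permutes the
cycles of `s`. By connectivity every half-edge lies on the `s`-cycle of `x` or of `ρ x`, and these
two cycles differ: `s^k x = ρ x` would produce, halfway along, a fixed point of `ρ` (`k` even) or
of `σ` (`k` odd). So there are exactly two Green walks, exchanged by `ρ` and hence of equal length
`l`. As `l` is odd, `s²` has the same cycles and the same periods as `s`.
-/

namespace Equiv.Perm

open Function

variable {α : Type*} {f : Perm α}

theorem minimalPeriod_eq_ncard_sameCycle [Finite α] (f : Perm α) (x : α) :
    minimalPeriod f x = {y | f.SameCycle x y}.ncard := by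
  have horbit : {y | f.SameCycle x y} = MulAction.orbit (Subgroup.zpowers f) x := by
    ext y
    constructor
    · rintro ⟨i, rfl⟩
      exact ⟨⟨f ^ i, i, rfl⟩, rfl⟩
    · rintro ⟨⟨g, i, rfl⟩, rfl⟩
      exact ⟨i, rfl⟩
  let _ := Fintype.ofFinite (MulAction.orbit (Subgroup.zpowers f) x)
  rw [horbit, ← Nat.card_coe_set_eq, Nat.card_eq_fintype_card, ← MulAction.minimalPeriod_eq_card]
  rfl

theorem minimalPeriod_pow_of_coprime [Finite α] {n : ℕ} {x : α}
    (h : (minimalPeriod f x).Coprime n) : minimalPeriod ⇑(f ^ n) x = minimalPeriod f x := by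
  rw [coe_pow, minimalPeriod_iterate_eq_div_gcd' (f.injective.mem_periodicPts x), h.gcd_eq_one,
    Nat.div_one]

theorem sameCycle_pow_iff_of_coprime [Finite α] {n : ℕ} {x y : α}
    (h : (minimalPeriod f x).Coprime n) : (f ^ n).SameCycle x y ↔ f.SameCycle x y := by
  suffices {y | (f ^ n).SameCycle x y} = {y | f.SameCycle x y} from Set.ext_iff.mp this y
  refine Set.eq_of_subset_of_ncard_le (fun y => SameCycle.of_pow) ?_ (Set.toFinite _)
  rw [← minimalPeriod_eq_ncard_sameCycle, ← minimalPeriod_eq_ncard_sameCycle,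
    minimalPeriod_pow_of_coprime h]

end Equiv.Perm

theorem card_quotient_sameCycleSetoid_eq_two {α : Type} {f : Equiv.Perm α} {x y : α}
    (hxy : ¬ f.SameCycle x y) (hcover : ∀ z, f.SameCycle x z ∨ f.SameCycle y z) :
    Nat.card (Quotient (sameCycleSetoid f)) = 2 := by
  refine Nat.card_eq_two_iff.mpr ⟨⟦x⟧, ⟦y⟧, fun h => hxy (Quotient.exact h), ?_⟩
  refine Set.eq_univ_of_forall (Quotient.ind fun z => ?_)
  exact (hcover z).imp (fun h => Quotient.sound h.symm) (fun h => Quotient.sound h.symm)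

namespace RibbonGraph

open Equiv.Perm Function

variable {H : Type} {G : RibbonGraph H}

theorem step_eq_mul : G.step = G.sigma * G.rho := rfl

theorem rho_inv (hρ : Involutive G.rho) : G.rho⁻¹ = G.rho :=
  Involutive.symm_eq_self_of_involutive _ hρ

theorem rho_mul_step_mul_rho_inv (hρ : Involutive G.rho) :
    G.rho * G.step * G.rho⁻¹ = G.step⁻¹ := by
  have hσ : G.sigma⁻¹ = G.sigma := Involutive.symm_eq_self_of_involutive _ G.invol
  rw [step_eq_mul, mul_inv_rev, hσ, ← mul_assoc, mul_inv_cancel_right, rho_inv hρ]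

theorem sameCycle_step_rho_iff (hρ : Involutive G.rho) {x y : H} :
    G.step.SameCycle (G.rho x) (G.rho y) ↔ G.step.SameCycle x y := by
  rw [← sameCycle_inv, ← rho_mul_step_mul_rho_inv hρ, sameCycle_conj, rho_inv hρ, hρ, hρ]

theorem sameCycle_step_rho_left_iff (hρ : Involutive G.rho) {x y : H} :
    G.step.SameCycle (G.rho x) y ↔ G.step.SameCycle x (G.rho y) := by
  rw [← sameCycle_step_rho_iff hρ, hρ]

theorem rho_step_zpow_apply (hρ : Involutive G.rho) (k : ℤ) (x : H) :
    G.rho ((G.step ^ k) x) = (G.step ^ (-k)) (G.rho x) := by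
  rw [zpow_neg, ← inv_zpow, ← rho_mul_step_mul_rho_inv hρ, conj_zpow]
  simp

theorem sigma_eq_step_rho (hρ : Involutive G.rho) (x : H) : G.sigma x = G.step (G.rho x) := by
  rw [step_eq_mul, mul_apply, hρ]

variable (G) in
theorem not_sameCycle_step_rho (hρ : Involutive G.rho) (hρfix : ∀ x, G.rho x ≠ x) (x : H) :
    ¬ G.step.SameCycle x (G.rho x) := by
  rintro ⟨k, hk⟩
  obtain ⟨t, rfl | rfl⟩ := Int.even_or_odd' k
  · apply hρfix ((G.step ^ t) x)
    rw [rho_step_zpow_apply hρ, ← hk, ← mul_apply, ← zpow_add]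
    congr 2
    ring
  · apply G.noFix ((G.step ^ (t + 1)) x)
    rw [sigma_eq_step_rho hρ, rho_step_zpow_apply hρ, ← hk, ← mul_apply, ← mul_apply,
      ← zpow_one_add, ← zpow_add]
    congr 2
    ring

variable (G) in
theorem sameCycle_step_or_sameCycle_step_rho (hρ : Involutive G.rho) (x y : H) :
    G.step.SameCycle x y ∨ G.step.SameCycle (G.rho x) y := by
  let R : H → H → Prop := fun a b => G.step.SameCycle a b ∨ G.step.SameCycle (G.rho a) b
  have hR : Equivalence R := by
    refine ⟨fun a => .inl (.refl _ a), ?_, ?_⟩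
    · rintro a b (h | h)
      · exact .inl h.symm
      · exact .inr ((sameCycle_step_rho_left_iff hρ).mp h).symm
    · rintro a b c (hab | hab) (hbc | hbc)
      · exact .inl (hab.trans hbc)
      · exact .inr (((sameCycle_step_rho_iff hρ).mpr hab).trans hbc)
      · exact .inr (hab.trans hbc)
      · exact .inl (((sameCycle_step_rho_left_iff hρ).mp hab).trans hbc)
  have hgen : ∀ a b, (G.sigma a = b ∨ G.rho a = b) → R a b := by
    rintro a b (rfl | rfl)
    · exact .inr ⟨1, by rw [zpow_one, ← sigma_eq_step_rho hρ]⟩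
    · exact .inr (.refl _ _)
  exact hR.eqvGen_iff.mp ((G.conn x y).mono hgen)

variable (G) in
theorem card_eq_two_mul_minimalPeriod_step [Finite H] (hρ : Involutive G.rho)
    (hρfix : ∀ x, G.rho x ≠ x) (x : H) : Nat.card H = 2 * minimalPeriod G.step x := by
  have hcover : Set.univ = {y | G.step.SameCycle x y} ∪ {y | G.step.SameCycle (G.rho x) y} :=
    (Set.eq_univ_of_forall (G.sameCycle_step_or_sameCycle_step_rho hρ x)).symm
  have hdisj : Disjoint {y | G.step.SameCycle x y} {y | G.step.SameCycle (G.rho x) y} :=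
    Set.disjoint_left.mpr fun y hx hρx =>
      G.not_sameCycle_step_rho hρ hρfix x (hx.trans hρx.symm)
  have himage : {y | G.step.SameCycle (G.rho x) y} = G.rho '' {y | G.step.SameCycle x y} := by
    ext y
    constructor
    · exact fun h => ⟨G.rho y, (sameCycle_step_rho_left_iff hρ).mp h, hρ y⟩
    · rintro ⟨z, hz, rfl⟩
      exact (sameCycle_step_rho_iff hρ).mpr hz
  rw [← Set.ncard_univ, hcover, Set.ncard_union_eq hdisj, himage,
    Set.ncard_image_of_injective _ G.rho.injective, minimalPeriod_eq_ncard_sameCycle, two_mul]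

end RibbonGraph

/-- A ribbon graph consisting solely of a single cycle of odd length
`l` (a connected graph in which every vertex has valency exactly `2`, with `2 l`
half-edges in total) has exactly two distinct Green walks, each of length `l`, and
hence exactly two distinct double-stepped Green walks, each of length `l`. -/
theorem odd_cycle_green_walks
    (H : Type) [Fintype H] (G : RibbonGraph H) (l : ℕ) (hodd : Odd l)
    (hcard : Fintype.card H = 2 * l)
    (hval : ∀ x : H, G.rho (G.rho x) = x ∧ G.rho x ≠ x) :
    Nat.card (Quotient (sameCycleSetoid G.step)) = 2 ∧
      (∀ x : H, Function.minimalPeriod (⇑G.step) x = l) ∧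
      Nat.card (Quotient (sameCycleSetoid (G.step ^ 2))) = 2 ∧
      (∀ x : H, Function.minimalPeriod (⇑(G.step ^ 2)) x = l) := by
  obtain ⟨hρ, hρfix⟩ := forall_and.mp hval
  have hperiod (x : H) : Function.minimalPeriod G.step x = l := by
    have := G.card_eq_two_mul_minimalPeriod_step hρ hρfix x
    rw [Nat.card_eq_fintype_card, hcard] at this
    omega
  have hcoprime (x : H) : (Function.minimalPeriod G.step x).Coprime 2 :=
    hperiod x ▸ hodd.coprime_two_right
  obtain ⟨x₀⟩ : Nonempty H := Fintype.card_pos_iff.mp (by rw [hcard]; have := hodd.pos; omega)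
  have hcount : Nat.card (Quotient (sameCycleSetoid G.step)) = 2 :=
    card_quotient_sameCycleSetoid_eq_two (G.not_sameCycle_step_rho hρ hρfix x₀)
      (G.sameCycle_step_or_sameCycle_step_rho hρ x₀)
  have hsetoid : sameCycleSetoid (G.step ^ 2) = sameCycleSetoid G.step :=
    Setoid.ext fun x _ => Equiv.Perm.sameCycle_pow_iff_of_coprime (hcoprime x)
  refine ⟨hcount, hperiod, hsetoid ▸ hcount, fun x => ?_⟩
  rw [Equiv.Perm.minimalPeriod_pow_of_coprime (hcoprime x), hperiod]
end

section
/- Let G be a ribbon graph with a unique cycle of length l (l odd), with n1 additional tree edges attached on the inside of the cycle and n2 on the outside. Then G has exactly two distinct double-stepped Green walks, of lengths l + 2*n1 and l + 2*n2 respectively. -/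
/-!
Since `sigma ∘ step = rho`, a Green walk crosses every `rho`-invariant cut of the half-edges an
even number of times. Cutting a bridge, or two non-bridge edges of the unicyclic graph (which then
falls into exactly two pieces: deleting `k` edges leaves at least `V - E + k` components), shows
that a Green walk containing both sides of a non-bridge edge is closed under `sigma`, hence under
`rho`, hence is the only Green walk. So when there are two Green walks, `sigma` exchanges their
non-bridge half-edges, the walks have `l + 2 n₁` and `l + 2 n₂` half-edges, both odd, and squaring
a permutation splits none of its odd cycles.
-/

namespace Equiv.Perm

section

variable {α : Type*} {f : Perm α}

theorem minimalPeriod_sq {a : α} (hodd : Odd (Function.minimalPeriod f a)) :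
    Function.minimalPeriod ⇑(f ^ 2) a = Function.minimalPeriod f a := by
  rw [coe_pow, Function.minimalPeriod_iterate_eq_div_gcd two_ne_zero, hodd.coprime_two_right,
    Nat.div_one]

variable [Finite α]

theorem sameCycle_sq_iff {a b : α} (hodd : Odd (Function.minimalPeriod f a)) :
    (f ^ 2).SameCycle a b ↔ f.SameCycle a b := by
  refine ⟨SameCycle.of_pow, fun h => ?_⟩
  obtain ⟨n, rfl⟩ := h.exists_nat_pow_eq
  obtain ⟨r, hr⟩ := hodd
  have hfix : (f ^ (Function.minimalPeriod f a * n)) a = a :=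
    (Function.isPeriodicPt_minimalPeriod f a).mul_const n
  refine ⟨((r + 1) * n : ℕ), ?_⟩
  rw [zpow_natCast, ← pow_mul, show 2 * ((r + 1) * n) = n + Function.minimalPeriod f a * n by
    rw [hr]; ring, pow_add, mul_apply, hfix]

theorem natCard_sameCycle (f : Perm α) (w : α) :
    Nat.card {z // f.SameCycle w z} = Function.minimalPeriod f w := by
  classical
  have : Fintype α := Fintype.ofFinite α
  have hmem : ∀ z, f.SameCycle w z ↔ z ∈ MulAction.orbit (Subgroup.zpowers f) w := by
    intro z
    rw [MulAction.mem_orbit_iff, Subgroup.exists_zpowers]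
    rfl
  rw [Nat.card_congr (Equiv.subtypeEquivRight hmem), Nat.card_eq_fintype_card,
    ← MulAction.minimalPeriod_eq_card]
  rfl

end

theorem natCard_quotient_sameCycleSetoid_sq_eq_two {α : Type} [Finite α] {f : Perm α}
    {w₁ w₂ : α} (hdist : ¬ f.SameCycle w₁ w₂) (hall : ∀ z, f.SameCycle w₁ z ∨ f.SameCycle w₂ z)
    (hodd₁ : Odd (Function.minimalPeriod f w₁)) (hodd₂ : Odd (Function.minimalPeriod f w₂)) :
    Nat.card (Quotient (sameCycleSetoid (f ^ 2))) = 2 := by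
  refine Nat.card_eq_two_iff.2 ⟨⟦w₁⟧, ⟦w₂⟧, fun h => hdist (Quotient.exact h).of_pow, ?_⟩
  refine Set.eq_univ_of_forall fun q => Quotient.inductionOn q fun z => ?_
  rcases hall z with h | h
  · exact .inl (Quotient.sound ((sameCycle_sq_iff hodd₁).2 h).symm)
  · exact .inr (Quotient.sound ((sameCycle_sq_iff hodd₂).2 h).symm)

end Equiv.Perm

theorem Nat.card_subtype_eq_card_and_add_card_and_not {α : Type*} [Finite α] (p q : α → Prop) :
    Nat.card {a // p a} = Nat.card {a // p a ∧ q a} + Nat.card {a // p a ∧ ¬ q a} := by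
  classical
  have := Fintype.ofFinite α
  simp only [Nat.card_eq_fintype_card, Fintype.card_subtype, ← Finset.filter_filter]
  exact (Finset.card_filter_add_card_filter_not q).symm

namespace RibbonGraph

variable {H : Type} {G : RibbonGraph H}

/-- Walking in the spanning subgraph made of the edges with both half-edges in `A`: one may
always turn around a vertex (along `rho`), but cross only the edges of the subgraph. -/
def Adj (G : RibbonGraph H) (A : Set H) (a b : H) : Prop :=
  G.rho a = b ∨ G.rho b = a ∨ (G.sigma a = b ∧ a ∈ A ∧ b ∈ A)

def Conn (G : RibbonGraph H) (A : Set H) : H → H → Prop := Relation.ReflTransGen (G.Adj A)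

def edge (G : RibbonGraph H) (p : H) : Set H := {p, G.sigma p}

@[simp] theorem mem_edge {p c : H} : c ∈ G.edge p ↔ c = p ∨ c = G.sigma p := Iff.rfl

theorem sigma_mem_edge {p c : H} (hc : c ∈ G.edge p) : G.sigma c ∈ G.edge p := by
  rcases hc with rfl | rfl
  exacts [.inr rfl, .inl (G.invol _)]

theorem sigma_mem_edge_iff {p c : H} : G.sigma c ∈ G.edge p ↔ c ∈ G.edge p :=
  ⟨fun h => G.invol c ▸ sigma_mem_edge h, sigma_mem_edge⟩

instance (A : Set H) : Std.Symm (G.Adj A) where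
  symm _ _ := by
    rintro (h | h | ⟨h, ha, hb⟩)
    · exact .inr (.inl h)
    · exact .inl h
    · exact .inr (.inr ⟨by rw [← h, G.invol], hb, ha⟩)

namespace Conn

variable {A B : Set H} {a b c : H}

@[refl] theorem refl (a : H) : G.Conn A a a := Relation.ReflTransGen.refl

theorem trans (hab : G.Conn A a b) (hbc : G.Conn A b c) : G.Conn A a c :=
  Relation.ReflTransGen.trans hab hbc

theorem symm (h : G.Conn A a b) : G.Conn A b a :=
  Relation.ReflTransGen.stdSymm.symm _ _ h

theorem mono (hAB : A ⊆ B) (h : G.Conn A a b) : G.Conn B a b := by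
  refine Relation.ReflTransGen.mono (fun c d hcd => ?_) _ _ h
  rcases hcd with h | h | ⟨h, hc, hd⟩
  exacts [.inl h, .inr (.inl h), .inr (.inr ⟨h, hAB hc, hAB hd⟩)]

end Conn

theorem conn_rho (A : Set H) (a : H) : G.Conn A a (G.rho a) := .single (.inl rfl)

theorem conn_sigma {A : Set H} {a : H} (ha : a ∈ A) (hσa : G.sigma a ∈ A) :
    G.Conn A a (G.sigma a) := .single (.inr (.inr ⟨rfl, ha, hσa⟩))

theorem conn_rho_iff {A : Set H} {c z : H} : G.Conn A (G.rho c) z ↔ G.Conn A c z :=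
  ⟨(conn_rho A c).trans, (conn_rho A c).symm.trans⟩

theorem conn_sigma_iff {A : Set H} {c z : H} (hc : c ∈ A) (hσc : G.sigma c ∈ A) :
    G.Conn A (G.sigma c) z ↔ G.Conn A c z :=
  ⟨(conn_sigma hc hσc).trans, (conn_sigma hc hσc).symm.trans⟩

theorem conn_univ (a b : H) : G.Conn Set.univ a b := by
  induction G.conn a b with
  | rel x y h =>
    rcases h with rfl | rfl
    exacts [conn_sigma trivial trivial, conn_rho _ x]
  | refl => rfl
  | symm _ _ _ ih => exact ih.symm
  | trans _ _ _ _ _ ih₁ ih₂ => exact ih₁.trans ih₂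

theorem forall_of_sigma_of_rho (P : H → Prop) (hσ : ∀ a, P a → P (G.sigma a))
    (hρ : ∀ a, P (G.rho a) ↔ P a) {a : H} (ha : P a) (b : H) : P b := by
  induction G.conn_univ a b with
  | refl => exact ha
  | tail _ hcd ih =>
    rcases hcd with rfl | rfl | ⟨rfl, -⟩
    exacts [(hρ _).2 ih, (hρ _).1 ih, hσ _ ih]

theorem conn_empty_iff [Finite H] {a b : H} : G.Conn ∅ a b ↔ G.rho.SameCycle a b := by
  constructor
  · intro h
    induction h with
    | refl => rfl
    | tail _ hcd ih =>
      rcases hcd with rfl | rfl | ⟨-, h, -⟩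
      · exact ih.trans (Equiv.Perm.sameCycle_apply_right.2 .rfl)
      · exact ih.trans (Equiv.Perm.sameCycle_apply_left.2 .rfl)
      · exact h.elim
  · rintro h
    obtain ⟨n, rfl⟩ := h.exists_nat_pow_eq
    clear h
    induction n with
    | zero => rfl
    | succ n ih => rw [pow_succ', Equiv.Perm.mul_apply]; exact ih.trans (conn_rho _ _)

theorem isBridge_iff {x : H} :
    G.IsBridge x ↔ ¬ G.Conn (Set.univ \ G.edge x) x (G.sigma x) := by
  have hadj : G.Adj (Set.univ \ G.edge x) = fun a b =>
      G.rho a = b ∨ G.rho b = a ∨ (G.sigma a = b ∧ a ≠ x ∧ a ≠ G.sigma x) := by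
    funext a b
    simp only [Adj, Set.mem_sdiff, Set.mem_univ, mem_edge, true_and, eq_iff_iff]
    refine or_congr_right (or_congr_right ⟨fun ⟨h, ha, _⟩ => ⟨h, not_or.1 ha⟩, ?_⟩)
    rintro ⟨rfl, ha₁, ha₂⟩
    refine ⟨rfl, not_or.2 ⟨ha₁, ha₂⟩, not_or.2 ⟨fun h => ha₂ ?_, fun h => ha₁ ?_⟩⟩
    · rw [← h, G.invol]
    · exact G.sigma.injective h
  rw [IsBridge, Conn, hadj]

theorem isBridge_sigma_iff {x : H} : G.IsBridge (G.sigma x) ↔ G.IsBridge x := by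
  rw [isBridge_iff, isBridge_iff, G.invol, show G.edge (G.sigma x) = G.edge x by
    rw [edge, edge, G.invol, Set.pair_comm]]
  exact not_congr ⟨Conn.symm, Conn.symm⟩

theorem adj_sdiff_edge_or {A : Set H} {p c d : H} (h : G.Adj A c d) :
    G.Adj (A \ G.edge p) c d ∨ (c ∈ G.edge p ∧ d ∈ G.edge p) := by
  rcases h with h | h | ⟨rfl, hc, hd⟩
  · exact .inl (.inl h)
  · exact .inl (.inr (.inl h))
  · by_cases hce : c ∈ G.edge p
    · exact .inr ⟨hce, sigma_mem_edge hce⟩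
    by_cases hde : G.sigma c ∈ G.edge p
    · exact .inr ⟨by simpa only [G.invol] using sigma_mem_edge hde, hde⟩
    · exact .inl (.inr (.inr ⟨rfl, ⟨hc, hce⟩, ⟨hd, hde⟩⟩))

theorem Conn.sdiff_edge {A : Set H} {p u v : H} (h : G.Conn A u v) :
    G.Conn (A \ G.edge p) u v ∨
      ((∃ q ∈ G.edge p, G.Conn (A \ G.edge p) u q) ∧
        ∃ q ∈ G.edge p, G.Conn (A \ G.edge p) v q) := by
  induction h with
  | refl => exact .inl (.refl u)
  | @tail c d _ hcd ih =>
    rcases adj_sdiff_edge_or hcd with hcd | ⟨hc, hd⟩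
    · rcases ih with ih | ⟨hu, q, hq, hcq⟩
      · exact .inl (ih.tail hcd)
      · exact .inr ⟨hu, q, hq, (Conn.symm (.single hcd)).trans hcq⟩
    · refine .inr ⟨?_, d, hd, .refl d⟩
      rcases ih with ih | ⟨hu, -⟩
      exacts [⟨c, hc, ih⟩, hu]

theorem Conn.of_sdiff_edge {A : Set H} {p u v : H} (h : G.Conn A u v)
    (hp : G.Conn (A \ G.edge p) p (G.sigma p)) :
    G.Conn (A \ G.edge p) u v := by
  have hends : ∀ q ∈ G.edge p, ∀ q' ∈ G.edge p, G.Conn (A \ G.edge p) q q' := by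
    rintro q (rfl | rfl) q' (rfl | rfl)
    exacts [.refl _, hp, hp.symm, .refl _]
  rcases h.sdiff_edge (p := p) with h | ⟨⟨q, hq, huq⟩, q', hq', hvq'⟩
  exacts [h, huq.trans ((hends q hq q' hq').trans hvq'.symm)]

theorem conn_sdiff_edge_of_not_isBridge {x : H} (hx : ¬ G.IsBridge x) (a b : H) :
    G.Conn (Set.univ \ G.edge x) a b :=
  (conn_univ a b).of_sdiff_edge (not_not.1 (isBridge_iff.not.1 hx))

theorem conn_or_conn_sigma_of_sdiff_edge {A : Set H} (hA : ∀ a b, G.Conn A a b) (p z : H) :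
    G.Conn (A \ G.edge p) z p ∨ G.Conn (A \ G.edge p) z (G.sigma p) := by
  rcases (hA z p).sdiff_edge (p := p) with h | ⟨⟨q, hq | hq, hzq⟩, -⟩
  · exact .inl h
  · exact .inl (hq ▸ hzq)
  · exact .inr (hq ▸ hzq)

def connSetoid (G : RibbonGraph H) (A : Set H) : Setoid H :=
  ⟨G.Conn A, ⟨Conn.refl, Conn.symm, Conn.trans⟩⟩

noncomputable def numComponents (G : RibbonGraph H) (A : Set H) : ℕ :=
  Nat.card (Quotient (G.connSetoid A))

theorem numComponents_empty [Finite H] : G.numComponents ∅ = G.numVertices :=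
  Nat.card_congr (Quotient.congrRight fun _ _ => conn_empty_iff)

theorem numComponents_le_one [Finite H] {A : Set H} (hA : ∀ a b, G.Conn A a b) :
    G.numComponents A ≤ 1 :=
  Finite.card_le_one_iff_subsingleton.2
    ⟨fun q q' => Quotient.inductionOn₂ q q' fun a b => Quotient.sound (hA a b)⟩

theorem numComponents_sdiff_edge_le [Finite H] (A : Set H) (p : H) :
    G.numComponents (A \ G.edge p) ≤ G.numComponents A + 1 := by
  classical
  let coarsen : Quotient (G.connSetoid (A \ G.edge p)) → Quotient (G.connSetoid A) :=
    Quotient.map id fun _ _ => Conn.mono Set.sdiff_subset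
  -- every class except that of `sigma p` is determined by its image
  let f : Quotient (G.connSetoid (A \ G.edge p)) → Option (Quotient (G.connSetoid A)) :=
    fun q => if q = ⟦G.sigma p⟧ then none else some (coarsen q)
  have hf : Function.Injective f := by
    refine fun q q' => Quotient.inductionOn₂ q q' fun a b hab => ?_
    by_cases ha : (⟦a⟧ : Quotient (G.connSetoid (A \ G.edge p))) = ⟦G.sigma p⟧ <;>
      by_cases hb : (⟦b⟧ : Quotient (G.connSetoid (A \ G.edge p))) = ⟦G.sigma p⟧
    · rw [ha, hb]
    all_goals simp only [f, ha, hb, if_true, if_false, reduceCtorEq, Option.some_inj] at hab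
    have hab : G.Conn A a b := Quotient.exact hab
    rcases hab.sdiff_edge (p := p) with h | ⟨⟨q, hq | hq, haq⟩, q', hq' | hq', hbq'⟩
    · exact Quotient.sound h
    · subst hq hq'; exact Quotient.sound (haq.trans hbq'.symm)
    · exact absurd (Quotient.sound (hq' ▸ hbq')) hb
    · exact absurd (Quotient.sound (hq ▸ haq)) ha
    · exact absurd (Quotient.sound (hq ▸ haq)) ha
  have := Fintype.ofFinite (Quotient (G.connSetoid A))
  calc G.numComponents (A \ G.edge p) ≤ Nat.card (Option (Quotient (G.connSetoid A))) :=
        Nat.card_le_card_of_injective f hf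
    _ = G.numComponents A + 1 := by
        rw [Nat.card_eq_fintype_card, Fintype.card_option, numComponents, Nat.card_eq_fintype_card]

theorem sameCycle_sigma_iff {a b : H} : G.sigma.SameCycle a b ↔ b ∈ G.edge a := by
  have hsq : G.sigma ^ 2 = 1 := Equiv.ext fun z => G.invol z
  refine ⟨fun ⟨i, hi⟩ => ?_, ?_⟩
  · rw [zpow_eq_zpow_emod' i hsq] at hi
    rcases Int.emod_two_eq i with h | h <;> simp [h, ← hi]
  · rintro (rfl | rfl)
    exacts [.rfl, Equiv.Perm.sameCycle_apply_right.2 .rfl]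

theorem card_eq_two_mul_numEdges [Fintype H] : Fintype.card H = 2 * G.numEdges := by
  classical
  let edgeOf : H → Quotient (sameCycleSetoid G.sigma) := Quotient.mk _
  have hfiber : ∀ e, (Finset.univ.filter fun z => edgeOf z = e).card = 2 := by
    refine Quotient.ind fun a => Finset.card_eq_two.2 ⟨a, G.sigma a, (G.noFix a).symm, ?_⟩
    ext z
    simp only [Finset.mem_filter, Finset.mem_univ, true_and, edgeOf, Quotient.eq,
      Finset.mem_insert, Finset.mem_singleton]
    exact Equiv.Perm.sameCycle_comm.trans sameCycle_sigma_iff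
  rw [← Finset.card_univ, Finset.card_eq_sum_card_fiberwise (f := edgeOf) (t := Finset.univ)
    fun _ _ => Finset.mem_coe.2 (Finset.mem_univ _), Finset.sum_congr rfl fun e _ => hfiber e,
    Finset.sum_const, Finset.card_univ, smul_eq_mul, mul_comm, numEdges, Nat.card_eq_fintype_card]

theorem two_mul_numVertices_le [Fintype H] (A : Finset H) (hA : ∀ a ∈ A, G.sigma a ∈ A) :
    2 * G.numVertices ≤ 2 * G.numComponents A + A.card := by
  classical
  induction A using Finset.strongInduction with
  | H A ih =>
  rcases A.eq_empty_or_nonempty with rfl | ⟨a, ha⟩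
  · simp [numComponents_empty]
  have hpair : {a, G.sigma a} ⊆ A :=
    Finset.insert_subset ha (Finset.singleton_subset_iff.2 (hA a ha))
  have hcard : (A \ {a, G.sigma a}).card + 2 = A.card := by
    rw [← Finset.card_sdiff_add_card_eq_card hpair, Finset.card_pair (G.noFix a).symm]
  have hcoe : ((A \ {a, G.sigma a} : Finset H) : Set H) = ↑A \ G.edge a := by
    ext; simp [edge]
  have hA' : ∀ c ∈ A \ {a, G.sigma a}, G.sigma c ∈ A \ {a, G.sigma a} := by
    intro c hc
    simp only [Finset.mem_sdiff, Finset.mem_insert, Finset.mem_singleton] at hc ⊢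
    refine ⟨hA c hc.1, fun h => hc.2 ?_⟩
    rcases h with h | h
    · exact .inr (by rw [← h, G.invol])
    · exact .inl (G.sigma.injective h)
  have hih := ih _ (Finset.sdiff_ssubset hpair (Finset.insert_nonempty _ _)) hA'
  have hle := numComponents_sdiff_edge_le (G := G) (↑A) a
  rw [hcoe] at hih
  omega

theorem even_card_filter_sameCycle_crossing [Fintype H] [DecidableEq H] (P : H → Prop)
    [DecidablePred P] (hP : ∀ c, P (G.rho c) ↔ P c) (w : H) :
    Even (Finset.univ.filter fun c => G.step.SameCycle w c ∧ ¬(P c ↔ P (G.sigma c))).card := by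
  have hstep : ∀ c, G.sigma (G.step c) = G.rho c := fun c => G.invol _
  -- `step` permutes the walk and, as `sigma ∘ step = rho`, carries `P ∘ sigma` to `P`
  have hshift : (Finset.univ.filter fun c => G.step.SameCycle w c ∧ P (G.sigma c)).card =
      (Finset.univ.filter fun c => G.step.SameCycle w c ∧ P c).card := by
    refine Finset.card_nbij' G.step.symm G.step (fun c hc => ?_) (fun c hc => ?_)
      (fun c _ => G.step.apply_symm_apply c) (fun c _ => G.step.symm_apply_apply c)
    · simp only [Finset.coe_filter, Finset.mem_univ, true_and, Set.mem_ofPred_eq] at hc ⊢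
      rwa [← Equiv.Perm.sameCycle_apply_right, Equiv.apply_symm_apply, ← hP, ← hstep,
        Equiv.apply_symm_apply]
    · simp only [Finset.coe_filter, Finset.mem_univ, true_and, Set.mem_ofPred_eq] at hc ⊢
      rwa [Equiv.Perm.sameCycle_apply_right, hstep, hP]
  have hcount :
      (Finset.univ.filter fun c => G.step.SameCycle w c ∧ P c).card +
        (Finset.univ.filter fun c => G.step.SameCycle w c ∧ P (G.sigma c)).card =
      (Finset.univ.filter fun c => G.step.SameCycle w c ∧ ¬(P c ↔ P (G.sigma c))).card +
        2 * (Finset.univ.filter fun c => G.step.SameCycle w c ∧ P c ∧ P (G.sigma c)).card := by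
    simp only [Finset.card_filter, ← Finset.sum_add_distrib, Finset.mul_sum]
    refine Finset.sum_congr rfl fun c _ => ?_
    by_cases h₁ : G.step.SameCycle w c <;> by_cases h₂ : P c <;> by_cases h₃ : P (G.sigma c) <;>
      simp [h₁, h₂, h₃]
  rw [hshift] at hcount
  have heven : Even (_ + 2 * _) := hcount ▸ Even.add_self _
  exact (Nat.even_add.1 heven).2 (even_two_mul _)

theorem not_conn_iff_conn_sigma_of_mem_edge {A : Set H} {p c : H}
    (hp : ¬ G.Conn A p (G.sigma p)) (hc : c ∈ G.edge p) :
    ¬(G.Conn A c p ↔ G.Conn A (G.sigma c) p) := by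
  rcases hc with rfl | rfl
  · exact fun h => hp (h.1 (.refl c)).symm
  · rw [G.invol]
    exact fun h => hp (h.2 (.refl p)).symm

theorem not_conn_iff_conn_sigma_iff_of_isBridge {y : H} (hy : G.IsBridge y) (c : H) :
    ¬(G.Conn (Set.univ \ G.edge y) c y ↔ G.Conn (Set.univ \ G.edge y) (G.sigma c) y) ↔
      c ∈ G.edge y := by
  refine ⟨fun h => by_contra fun hc => h ?_,
    not_conn_iff_conn_sigma_of_mem_edge (isBridge_iff.1 hy)⟩
  exact (conn_sigma_iff (A := Set.univ \ G.edge y) ⟨trivial, hc⟩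
    ⟨trivial, sigma_mem_edge_iff.not.2 hc⟩).symm

theorem sameCycle_sigma_of_isBridge [Fintype H] {y : H} (hy : G.IsBridge y) :
    G.step.SameCycle y (G.sigma y) := by
  classical
  by_contra hσy
  have hcross := even_card_filter_sameCycle_crossing
    (fun c => G.Conn (Set.univ \ G.edge y) c y) (fun _ => conn_rho_iff) y
  have hfilter : (Finset.univ.filter fun c => G.step.SameCycle y c ∧
      ¬(G.Conn (Set.univ \ G.edge y) c y ↔ G.Conn (Set.univ \ G.edge y) (G.sigma c) y)) = {y} := by
    ext c
    simp only [Finset.mem_filter, Finset.mem_univ, true_and, Finset.mem_singleton,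
      not_conn_iff_conn_sigma_iff_of_isBridge hy]
    refine ⟨?_, fun hc => hc ▸ ⟨.rfl, .inl rfl⟩⟩
    rintro ⟨hc, rfl | rfl⟩
    exacts [rfl, absurd hc hσy]
  rw [hfilter, Finset.card_singleton] at hcross
  exact Nat.not_even_one hcross

theorem not_forall_conn_sdiff_two_edges [Fintype H] (hEV : G.numEdges ≤ G.numVertices)
    {x y : H} (hxy : y ∉ G.edge x) :
    ¬ ∀ a b, G.Conn ((Set.univ \ G.edge x) \ G.edge y) a b := by
  classical
  intro hconn
  let A : Finset H := Finset.univ \ ({x, G.sigma x} ∪ {y, G.sigma y})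
  have hcoe : (A : Set H) = (Set.univ \ G.edge x) \ G.edge y := by
    ext c; simp [A, edge]; tauto
  have hA : ∀ c ∈ A, G.sigma c ∈ A := by
    intro c hc
    rw [← Finset.mem_coe, hcoe] at hc ⊢
    exact ⟨⟨trivial, sigma_mem_edge_iff.not.2 hc.1.2⟩, sigma_mem_edge_iff.not.2 hc.2⟩
  have hdisj : Disjoint ({x, G.sigma x} : Finset H) {y, G.sigma y} := by
    simp only [Finset.disjoint_insert_right, Finset.disjoint_singleton_right, Finset.mem_insert,
      Finset.mem_singleton]
    exact ⟨fun h => hxy h, fun h => hxy (sigma_mem_edge_iff.1 h)⟩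
  have hcard : A.card + 4 = Fintype.card H := by
    rw [← Finset.card_univ, ← Finset.card_sdiff_add_card_eq_card (Finset.subset_univ _),
      Finset.card_union_of_disjoint hdisj, Finset.card_pair (G.noFix x).symm,
      Finset.card_pair (G.noFix y).symm]
  -- at least `V - (E - 2) ≥ 2` components remain
  have hbound := two_mul_numVertices_le A hA
  rw [hcoe] at hbound
  have := numComponents_le_one hconn
  have := G.card_eq_two_mul_numEdges
  omega

theorem not_conn_sdiff_two_edges_self_sigma [Fintype H] (hEV : G.numEdges ≤ G.numVertices)
    {x y : H} (hy : ¬ G.IsBridge y) (hxy : y ∉ G.edge x) :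
    ¬ G.Conn ((Set.univ \ G.edge x) \ G.edge y) x (G.sigma x) := by
  rw [Set.sdiff_sdiff_comm]
  refine fun h => not_forall_conn_sdiff_two_edges hEV hxy fun a b => ?_
  rw [Set.sdiff_sdiff_comm]
  exact (conn_sdiff_edge_of_not_isBridge hy a b).of_sdiff_edge h

/-- Deleting the edges of `x` and `y` leaves two components, and each of the two edges joins
them. -/
theorem not_conn_iff_conn_sigma_iff_of_not_isBridge [Fintype H]
    (hEV : G.numEdges ≤ G.numVertices) {x y : H} (hx : ¬ G.IsBridge x) (hy : ¬ G.IsBridge y)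
    (hxy : y ∉ G.edge x) (c : H) :
    ¬(G.Conn ((Set.univ \ G.edge x) \ G.edge y) c x ↔
        G.Conn ((Set.univ \ G.edge x) \ G.edge y) (G.sigma c) x) ↔
      c ∈ G.edge x ∨ c ∈ G.edge y := by
  set D := (Set.univ \ G.edge x) \ G.edge y
  have hyx : x ∉ G.edge y := fun h => hxy (by
    rcases h with rfl | rfl
    exacts [.inl rfl, .inr (G.invol y).symm])
  have hnx : ¬ G.Conn D x (G.sigma x) := not_conn_sdiff_two_edges_self_sigma hEV hy hxy
  have hny : ¬ G.Conn D y (G.sigma y) := by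
    simpa only [D, Set.sdiff_sdiff_comm] using not_conn_sdiff_two_edges_self_sigma hEV hx hyx
  have hsides : ∀ z, G.Conn D z x ∨ G.Conn D z (G.sigma x) := by
    simpa only [D, Set.sdiff_sdiff_comm] using
      conn_or_conn_sigma_of_sdiff_edge (conn_sdiff_edge_of_not_isBridge hy) x
  refine ⟨fun h => by_contra fun hc => h ?_, ?_⟩
  · rw [not_or] at hc
    exact (conn_sigma_iff (A := D) ⟨⟨trivial, hc.1⟩, hc.2⟩
      ⟨⟨trivial, sigma_mem_edge_iff.not.2 hc.1⟩, sigma_mem_edge_iff.not.2 hc.2⟩).symm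
  rintro (hc | hc)
  · exact not_conn_iff_conn_sigma_of_mem_edge hnx hc
  have hy' : ¬(G.Conn D y x ↔ G.Conn D (G.sigma y) x) := fun h => hny <| by
    rcases hsides y with h₁ | h₁ <;> rcases hsides (G.sigma y) with h₂ | h₂
    exacts [h₁.trans h₂.symm, h₁.trans (h.1 h₁).symm, (h.2 h₂).trans h₂.symm, h₁.trans h₂.symm]
  rcases hc with rfl | rfl
  · exact hy'
  · rwa [G.invol, iff_comm]

theorem sameCycle_sigma_of_not_isBridge [Fintype H] (hEV : G.numEdges ≤ G.numVertices)
    {x y : H} (hx : ¬ G.IsBridge x) (hy : ¬ G.IsBridge y) (hxy : y ∉ G.edge x)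
    (hxσ : G.step.SameCycle x (G.sigma x))
    (hxy' : G.step.SameCycle x y) : G.step.SameCycle x (G.sigma y) := by
  classical
  by_contra hσy
  have hcross := even_card_filter_sameCycle_crossing
    (fun c => G.Conn ((Set.univ \ G.edge x) \ G.edge y) c x) (fun _ => conn_rho_iff) x
  have hfilter : (Finset.univ.filter fun c => G.step.SameCycle x c ∧
      ¬(G.Conn ((Set.univ \ G.edge x) \ G.edge y) c x ↔
        G.Conn ((Set.univ \ G.edge x) \ G.edge y) (G.sigma c) x)) = {x, G.sigma x, y} := by
    ext c
    simp only [Finset.mem_filter, Finset.mem_univ, true_and, Finset.mem_insert,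
      Finset.mem_singleton, not_conn_iff_conn_sigma_iff_of_not_isBridge hEV hx hy hxy c, mem_edge]
    refine ⟨?_, ?_⟩
    · rintro ⟨hc, (rfl | rfl) | (rfl | rfl)⟩
      exacts [.inl rfl, .inr (.inl rfl), .inr (.inr rfl), absurd hc hσy]
    · rintro (rfl | rfl | rfl)
      exacts [⟨.rfl, .inl (.inl rfl)⟩, ⟨hxσ, .inl (.inr rfl)⟩, ⟨hxy', .inr (.inl rfl)⟩]
  rw [hfilter, Finset.card_eq_three.2 ⟨x, G.sigma x, y, (G.noFix x).symm,
    fun h => hxy (h ▸ .inl rfl), fun h => hxy (h ▸ .inr rfl), rfl⟩] at hcross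
  exact Nat.not_even_iff_odd.2 (by decide) hcross

theorem not_sameCycle_sigma_of_not_isBridge [Fintype H] (hEV : G.numEdges ≤ G.numVertices)
    {w₁ w₂ : H} (hdist : ¬ G.step.SameCycle w₁ w₂) {x : H} (hx : ¬ G.IsBridge x) :
    ¬ G.step.SameCycle x (G.sigma x) := by
  intro hxσ
  have hσ : ∀ y, G.step.SameCycle x y → G.step.SameCycle x (G.sigma y) := by
    intro y hy
    by_cases hyb : G.IsBridge y
    · exact hy.trans (sameCycle_sigma_of_isBridge hyb)
    by_cases hxy : y ∈ G.edge x
    · rcases hxy with rfl | rfl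
      exacts [hxσ, by rw [G.invol]]
    · exact sameCycle_sigma_of_not_isBridge hEV hx hyb hxy hxσ hy
  -- a Green walk closed under `sigma` is closed under `rho = sigma ∘ step`, so it is everything
  have hρ : ∀ y, G.step.SameCycle x (G.rho y) ↔ G.step.SameCycle x y := fun y =>
    ⟨fun h => Equiv.Perm.sameCycle_apply_right.1 (hσ _ h),
      fun h => G.invol (G.rho y) ▸ hσ _ (Equiv.Perm.sameCycle_apply_right.2 h)⟩
  have hall := forall_of_sigma_of_rho _ hσ hρ (Equiv.Perm.SameCycle.refl _ x)
  exact hdist ((hall w₁).symm.trans (hall w₂))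

/-- `sigma` exchanges the non-bridge half-edges of the two Green walks. -/
theorem natCard_not_isBridge_sameCycle [Finite H] {l : ℕ} {w w' : H}
    (hσ : ∀ x, ¬ G.IsBridge x → ¬ G.step.SameCycle x (G.sigma x))
    (hall : ∀ z, G.step.SameCycle w z ∨ G.step.SameCycle w' z)
    (hcyc : Nat.card {x : H // ¬ G.IsBridge x} = 2 * l) :
    Nat.card {x : H // ¬ G.IsBridge x ∧ G.step.SameCycle w x} = l := by
  have hswap : ∀ x, ¬ G.IsBridge x →
      (G.step.SameCycle w x ↔ ¬ G.step.SameCycle w (G.sigma x)) := fun x hx =>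
    ⟨fun h h' => hσ x hx (h.symm.trans h'), fun h => by_contra fun h' =>
      hσ x hx ((((hall x).resolve_left h').symm.trans ((hall _).resolve_left h)))⟩
  have heq : Nat.card {x : H // ¬ G.IsBridge x ∧ G.step.SameCycle w x} =
      Nat.card {x : H // ¬ G.IsBridge x ∧ ¬ G.step.SameCycle w x} :=
    Nat.card_congr <| Equiv.subtypeEquiv G.sigma fun x => by
      rw [isBridge_sigma_iff]
      exact and_congr_right (hswap x)
  have := Nat.card_subtype_eq_card_and_add_card_and_not (fun x => ¬ G.IsBridge x)
    (G.step.SameCycle w)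
  omega

theorem minimalPeriod_step_eq [Finite H] {l n : ℕ} {w w' : H}
    (hσ : ∀ x, ¬ G.IsBridge x → ¬ G.step.SameCycle x (G.sigma x))
    (hall : ∀ z, G.step.SameCycle w z ∨ G.step.SameCycle w' z)
    (hcyc : Nat.card {x : H // ¬ G.IsBridge x} = 2 * l)
    (hbridge : Nat.card {x : H // G.IsBridge x ∧ G.step.SameCycle w x} = 2 * n) :
    Function.minimalPeriod G.step w = l + 2 * n := by
  have hsplit : Nat.card {x // G.step.SameCycle w x} =
      Nat.card {x // G.IsBridge x ∧ G.step.SameCycle w x} +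
        Nat.card {x // ¬ G.IsBridge x ∧ G.step.SameCycle w x} := by
    simpa only [and_comm] using
      Nat.card_subtype_eq_card_and_add_card_and_not (G.step.SameCycle w) G.IsBridge
  rw [← Equiv.Perm.natCard_sameCycle, hsplit, hbridge, natCard_not_isBridge_sameCycle hσ hall hcyc,
    add_comm]

end RibbonGraph

/-- Let `G` be a ribbon graph with a unique cycle, of odd length `l`
(so `G` is connected and unicyclic, and the non-bridge edges — the edges of the
cycle — account for `2 * l` half-edges).  `G` has exactly two distinct Green walks,
with representatives `w₁` (the inside) and `w₂` (the outside); suppose `n₁` of the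
tree (bridge) edges have their half-edges on the walk of `w₁` and `n₂` on the walk
of `w₂`.  Then `G` has exactly two distinct double-stepped Green walks, of lengths
`l + 2 * n₁` and `l + 2 * n₂` respectively. -/
theorem unicyclic_odd_double_stepped_green_walks
    (H : Type) [Fintype H] (G : RibbonGraph H) (l n₁ n₂ : ℕ) (hodd : Odd l)
    (hunicyclic : G.numEdges = G.numVertices)
    (hcyc : Nat.card {x : H // ¬ G.IsBridge x} = 2 * l)
    (w₁ w₂ : H)
    (hdist : ¬ G.step.SameCycle w₁ w₂)
    (hall : ∀ x : H, G.step.SameCycle w₁ x ∨ G.step.SameCycle w₂ x)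
    (hin : Nat.card {x : H // G.IsBridge x ∧ G.step.SameCycle w₁ x} = 2 * n₁)
    (hout : Nat.card {x : H // G.IsBridge x ∧ G.step.SameCycle w₂ x} = 2 * n₂) :
    Nat.card (Quotient (sameCycleSetoid (G.step ^ 2))) = 2 ∧
      Function.minimalPeriod (⇑(G.step ^ 2)) w₁ = l + 2 * n₁ ∧
      Function.minimalPeriod (⇑(G.step ^ 2)) w₂ = l + 2 * n₂ := by
  have hσ := fun x => G.not_sameCycle_sigma_of_not_isBridge hunicyclic.le hdist (x := x)
  have hperiod₁ := G.minimalPeriod_step_eq hσ hall hcyc hin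
  have hperiod₂ := G.minimalPeriod_step_eq hσ (fun z => (hall z).symm) hcyc hout
  have hodd₁ : Odd (Function.minimalPeriod G.step w₁) := hperiod₁ ▸ hodd.add_even (even_two_mul _)
  have hodd₂ : Odd (Function.minimalPeriod G.step w₂) := hperiod₂ ▸ hodd.add_even (even_two_mul _)
  exact ⟨Equiv.Perm.natCard_quotient_sameCycleSetoid_sq_eq_two hdist hall hodd₁ hodd₂,
    (Equiv.Perm.minimalPeriod_sq hodd₁).trans hperiod₁,
    (Equiv.Perm.minimalPeriod_sq hodd₂).trans hperiod₂⟩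
end

section
/- In a finite connected Brauer graph G, an edge x is non-exceptional if and only if x belongs to a cycle of G, or lies on a simple path between two vertices each lying on a cycle, or on a simple path between a vertex on a cycle and a vertex of multiplicity greater than 1, or on a simple path between two vertices of multiplicity greater than 1. -/
/-!
A Brauer graph is encoded (forgetting the cyclic orderings, which play no role in
these statements) as a finite connected multigraph: a vertex type `V`, an edge type
`E`, an endpoint map `ends : E → Sym2 V`, together with a multiplicity `mult : V → ℕ`.
-/

structure Multigraph (V E : Type) where
  ends : E → Sym2 V

namespace Multigraph

variable {V E : Type}

/-- A walk of length `n` in a multigraph: vertices `vs 0, …, vs n` and edges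
`es 0, …, es (n-1)` with `es i` joining `vs i` and `vs (i+1)`. -/
structure Walk (G : Multigraph V E) (n : ℕ) where
  vs : Fin (n + 1) → V
  es : Fin n → E
  ok : ∀ i : Fin n, G.ends (es i) = s(vs i.castSucc, vs i.succ)

/-- The walk stays inside the subgraph with vertex set `VS` and edge set `ES`. -/
def Walk.inSub {G : Multigraph V E} {n : ℕ} (w : G.Walk n) (VS : Set V) (ES : Set E) :
    Prop :=
  (∀ i, w.vs i ∈ VS) ∧ ∀ i, w.es i ∈ ES

/-- A cycle: a closed walk of positive length with pairwise distinct edges and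
pairwise distinct vertices (other than the repeated endpoint). -/
def IsCycleWalk (G : Multigraph V E) {n : ℕ} (w : G.Walk n) : Prop :=
  0 < n ∧ Function.Injective w.es ∧ w.vs (Fin.last n) = w.vs 0 ∧
    ∀ i j : Fin n, w.vs i.castSucc = w.vs j.castSucc → i = j

def VertexOnCycle (G : Multigraph V E) (v : V) : Prop :=
  ∃ n, ∃ w : G.Walk n, G.IsCycleWalk w ∧ ∃ i, w.vs i = v

def EdgeOnCycle (G : Multigraph V E) (e : E) : Prop :=
  ∃ n, ∃ w : G.Walk n, G.IsCycleWalk w ∧ ∃ i, w.es i = e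

/-- The subgraph on `(VS, ES)` is closed (edges of `ES` have endpoints in `VS`)
and any two of its vertices are joined by a walk inside it. -/
def SubConnected (G : Multigraph V E) (VS : Set V) (ES : Set E) : Prop :=
  (∀ e ∈ ES, ∀ v ∈ G.ends e, v ∈ VS) ∧
    ∀ u ∈ VS, ∀ v ∈ VS, ∃ n, ∃ w : G.Walk n,
      w.inSub VS ES ∧ w.vs 0 = u ∧ w.vs (Fin.last n) = v

def Connected (G : Multigraph V E) : Prop := G.SubConnected Set.univ Set.univ

/-- The subgraph on `(VS, ES)` is a tree: connected and containing no cycle. -/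
def IsTreeSub (G : Multigraph V E) (VS : Set V) (ES : Set E) : Prop :=
  G.SubConnected VS ES ∧
    ¬ ∃ n, ∃ w : G.Walk n, G.IsCycleWalk w ∧ w.inSub VS ES

/-- `G` with multiplicities `mult` is a Brauer tree: a tree with at most one vertex
of multiplicity greater than one. -/
def IsBrauerTree (G : Multigraph V E) (mult : V → ℕ) : Prop :=
  G.IsTreeSub Set.univ Set.univ ∧ {v : V | 1 < mult v}.Subsingleton

/-- An exceptional subtree of a Brauer graph `(G, mult)`: a tree subgraph `(VS, ES)`
with a unique connecting vertex `v` such that the complement `(G \ T) ∪ {v}` is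
connected, `T` meets cycles of `G` only possibly at `v`, and every vertex of `T`
other than possibly `v` has multiplicity `1`. -/
structure ExcSubtree (G : Multigraph V E) (mult : V → ℕ) where
  VS : Set V
  ES : Set E
  v : V
  v_mem : v ∈ VS
  tree : G.IsTreeSub VS ES
  compl_conn : G.SubConnected (VSᶜ ∪ {v}) ESᶜ
  v_unique : ∀ u ∈ VS, G.SubConnected (VSᶜ ∪ {u}) ESᶜ → u = v
  cycles : ∀ u ∈ VS, G.VertexOnCycle u → u = v
  mult_one : ∀ u ∈ VS, u ≠ v → mult u = 1

/-- An edge is exceptional if it belongs to some exceptional subtree. -/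
def ExceptionalEdge (G : Multigraph V E) (mult : V → ℕ) (e : E) : Prop :=
  ∃ T : G.ExcSubtree mult, e ∈ T.ES

end Multigraph

/-!
An edge `x` on no cycle is a bridge: without it, every vertex is reachable from exactly one
endpoint, `a` or `b`, which splits the vertices into the side of `a` and the side of `b`. Call a
vertex heavy if it lies on a cycle or has multiplicity greater than `1`. If both sides contain
heavy vertices, a simple path between them must cross `x`. Otherwise, say every heavy vertex is on
the side of `a`; then the side of `b` together with `a`, and all edges meeting the side of `b`,
form an exceptional subtree containing `x` with connecting vertex `a`. The connecting vertex is
unique because `G` is not a Brauer tree.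

Conversely, an exceptional subtree `T` meets cycles only in its connecting vertex `v`, so a cycle
edge in `T` would be a loop at `v`, i.e. a cycle inside `T`. A walk that starts at a heavy vertex
and uses an edge of `T` must pass through `v` before that edge; a simple path through an edge of
`T` with heavy ends would therefore pass through `v` on both sides of that edge.
-/

theorem Fin.exists_crossing_of_not {n : ℕ} {P : Fin (n + 1) → Prop} (h0 : P 0) {k : Fin (n + 1)}
    (hk : ¬ P k) : ∃ j : Fin n, j.succ ≤ k ∧ P j.castSucc ∧ ¬ P j.succ := by
  by_contra! h
  suffices ∀ i : Fin (n + 1), i ≤ k → P i from hk (this k le_rfl)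
  intro i
  induction i using Fin.induction with
  | zero => exact fun _ => h0
  | succ j ih => exact fun hj => h j hj (ih (j.castSucc_lt_succ.le.trans hj))

lemma SimpleGraph.Reachable.mem_and_reachable_of_forall_adj {V : Type} {G₁ G₂ : SimpleGraph V}
    {S : Set V} (hS : ∀ u v, G₁.Adj u v → u ∈ S → v ∈ S ∧ G₂.Adj u v) {u v : V}
    (h : G₁.Reachable u v) (hu : u ∈ S) : v ∈ S ∧ G₂.Reachable u v := by
  obtain ⟨p⟩ := h
  induction p with
  | nil => exact ⟨hu, .rfl⟩
  | cons hadj _ ih =>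
    obtain ⟨hv, hadj₂⟩ := hS _ _ hadj hu
    exact (ih hv).imp_right hadj₂.reachable.trans

namespace Multigraph

variable {V E : Type} {G : Multigraph V E} {n : ℕ} {ES : Set E} {x : E} {a b : V}
  {mult : V → ℕ}

namespace Walk

lemma mem_ends_castSucc (w : G.Walk n) (i : Fin n) : w.vs i.castSucc ∈ G.ends (w.es i) :=
  w.ok i ▸ Sym2.mem_mk_left _ _

lemma mem_ends_succ (w : G.Walk n) (i : Fin n) : w.vs i.succ ∈ G.ends (w.es i) :=
  w.ok i ▸ Sym2.mem_mk_right _ _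

def nil (u : V) : G.Walk 0 where
  vs _ := u
  es := Fin.elim0
  ok i := i.elim0

def cons (e : E) (u : V) (w : G.Walk n) (h : G.ends e = s(u, w.vs 0)) : G.Walk (n + 1) where
  vs := Fin.cons u w.vs
  es := Fin.cons e w.es
  ok := Fin.cases (by simpa using h) fun i => by simpa [← Fin.succ_castSucc] using w.ok i

def reverse (w : G.Walk n) : G.Walk n where
  vs := w.vs ∘ Fin.rev
  es := w.es ∘ Fin.rev
  ok i := by
    change G.ends (w.es i.rev) = s(w.vs i.castSucc.rev, w.vs i.succ.rev)
    rw [w.ok, Fin.rev_castSucc, Fin.rev_succ, Sym2.eq_swap]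

@[simp] lemma reverse_vs (w : G.Walk n) (i : Fin (n + 1)) : w.reverse.vs i = w.vs i.rev := rfl

@[simp] lemma reverse_es (w : G.Walk n) (i : Fin n) : w.reverse.es i = w.es i.rev := rfl

lemma injective_es_of_injective_vs {w : G.Walk n} (h : Function.Injective w.vs) :
    Function.Injective w.es := by
  intro i j hij
  have hends := w.ok i
  rw [hij, w.ok j, Sym2.eq_iff] at hends
  rcases hends with ⟨h1, -⟩ | ⟨h1, h2⟩
  · exact Fin.castSucc_injective _ (h h1).symm
  · have h1 := congrArg Fin.val (h h1)
    have h2 := congrArg Fin.val (h h2)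
    simp only [Fin.val_castSucc, Fin.val_succ] at h1 h2
    omega

end Walk

/-- Loops and parallel edges do not affect reachability along the edges of `ES`, so it is computed
in a simple graph, where `SimpleGraph.Walk.bypass` supplies paths. -/
def linkGraph (G : Multigraph V E) (ES : Set E) : SimpleGraph V where
  Adj u v := u ≠ v ∧ ∃ e ∈ ES, G.ends e = s(u, v)
  symm := ⟨fun _ _ ⟨huv, e, he, h⟩ => ⟨huv.symm, e, he, h.trans Sym2.eq_swap⟩⟩
  loopless := ⟨fun _ h => h.1 rfl⟩

lemma linkGraph_reachable_of_mem_ends {e : E} {u v : V} (he : e ∈ ES) (hu : u ∈ G.ends e)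
    (hv : v ∈ G.ends e) : (G.linkGraph ES).Reachable u v := by
  by_cases huv : u = v
  · exact huv ▸ .rfl
  · exact SimpleGraph.Adj.reachable ⟨huv, e, he, (Sym2.mem_and_mem_iff huv).1 ⟨hu, hv⟩⟩

namespace Walk

lemma linkGraph_reachable {w : G.Walk n} (hw : ∀ i, w.es i ∈ ES) (i : Fin (n + 1)) :
    (G.linkGraph ES).Reachable (w.vs 0) (w.vs i) := by
  induction i using Fin.induction with
  | zero => rfl
  | succ i ih =>
    exact ih.trans (linkGraph_reachable_of_mem_ends (hw i) (mem_ends_castSucc w i)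
      (mem_ends_succ w i))

noncomputable def ofLink {u v : V} (p : (G.linkGraph ES).Walk u v) : G.Walk p.length where
  vs i := p.getVert i
  es i := (p.adj_getVert_succ i.isLt).2.choose
  ok i := by simpa using (p.adj_getVert_succ i.isLt).2.choose_spec.2

variable {u v : V} (p : (G.linkGraph ES).Walk u v)

@[simp] lemma ofLink_vs_zero : (ofLink p).vs 0 = u := p.getVert_zero

@[simp] lemma ofLink_vs_last : (ofLink p).vs (Fin.last _) = v := p.getVert_length

lemma ofLink_es_mem (i : Fin p.length) : (ofLink p).es i ∈ ES :=
  (p.adj_getVert_succ i.isLt).2.choose_spec.1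

lemma injective_ofLink_vs (hp : p.IsPath) : Function.Injective (ofLink p).vs :=
  fun i j h => Fin.ext (hp.getVert_injOn (Nat.lt_succ_iff.1 i.isLt) (Nat.lt_succ_iff.1 j.isLt) h)

end Walk

lemma subConnected_iff {VS : Set V} : G.SubConnected VS ES ↔
    (∀ e ∈ ES, ∀ v ∈ G.ends e, v ∈ VS) ∧
      ∀ u ∈ VS, ∀ v ∈ VS, (G.linkGraph ES).Reachable u v := by
  refine and_congr_right fun hclosed => forall₂_congr fun u hu => forall₂_congr fun v hv => ?_
  constructor
  · rintro ⟨n, w, ⟨-, hes⟩, rfl, rfl⟩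
    exact w.linkGraph_reachable hes _
  · rintro ⟨p⟩
    refine ⟨_, Walk.ofLink p, ⟨Fin.cases ?_ fun i => ?_, Walk.ofLink_es_mem p⟩, by simp,
      by simp⟩
    · simpa using hu
    · exact hclosed _ (Walk.ofLink_es_mem p i) _ (Walk.mem_ends_succ _ i)

lemma Connected.linkGraph_reachable (hconn : G.Connected) (u v : V) :
    (G.linkGraph Set.univ).Reachable u v :=
  (subConnected_iff.1 hconn).2 u trivial v trivial

lemma Walk.isCycleWalk_cons {e : E} {w : G.Walk n} (hinj : Function.Injective w.vs)
    (he : ∀ i, w.es i ≠ e) (h : G.ends e = s(w.vs (Fin.last n), w.vs 0)) :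
    G.IsCycleWalk (w.cons e _ h) := by
  refine ⟨n.succ_pos, ?_, by simp [cons, ← Fin.succ_last], ?_⟩
  · exact Fin.cons_injective_iff.2
      ⟨fun ⟨i, hi⟩ => he i hi, injective_es_of_injective_vs hinj⟩
  · intro i j hij
    cases i using Fin.cases <;> cases j using Fin.cases <;>
      simp only [cons, Fin.castSucc_zero, Fin.cons_zero, ← Fin.succ_castSucc, Fin.cons_succ]
        at hij
    · rfl
    · exact absurd (hinj hij).symm (Fin.castSucc_ne_last _)
    · exact absurd (hinj hij) (Fin.castSucc_ne_last _)
    · rw [Fin.castSucc_injective _ (hinj hij)]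

lemma edgeOnCycle_of_linkGraph_reachable (hab : G.ends x = s(a, b))
    (h : (G.linkGraph {x}ᶜ).Reachable b a) : G.EdgeOnCycle x := by
  classical
  obtain ⟨p⟩ := h
  have hx : ∀ i, (Walk.ofLink p.bypass).es i ≠ x := Walk.ofLink_es_mem _
  refine ⟨_, _, Walk.isCycleWalk_cons (Walk.injective_ofLink_vs _ p.bypass_isPath) hx
    (by simpa using hab), 0, rfl⟩

lemma IsCycleWalk.vertexOnCycle_of_mem_ends {w : G.Walk n} (hw : G.IsCycleWalk w) (i : Fin n)
    {p : V} (hp : p ∈ G.ends (w.es i)) : G.VertexOnCycle p := by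
  rw [w.ok i, Sym2.mem_iff] at hp
  rcases hp with rfl | rfl
  exacts [⟨n, w, hw, _, rfl⟩, ⟨n, w, hw, _, rfl⟩]

def sideOf (G : Multigraph V E) (x : E) (a : V) : Set V :=
  {u | (G.linkGraph {x}ᶜ).Reachable a u}

lemma mem_sideOf_self : a ∈ G.sideOf x a := SimpleGraph.Reachable.refl a

lemma mem_sideOf_of_mem_ends {e : E} {p q : V} (hp : p ∈ G.sideOf x a) (he : e ≠ x)
    (hpe : p ∈ G.ends e) (hqe : q ∈ G.ends e) : q ∈ G.sideOf x a :=
  SimpleGraph.Reachable.trans hp (linkGraph_reachable_of_mem_ends he hpe hqe)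

lemma mem_sideOf_or (hconn : G.Connected) (hab : G.ends x = s(a, b)) (u : V) :
    u ∈ G.sideOf x a ∨ u ∈ G.sideOf x b := by
  obtain ⟨n, w, -, h0, rfl⟩ := hconn.2 a trivial u trivial
  induction Fin.last n using Fin.induction with
  | zero => exact .inl (h0 ▸ mem_sideOf_self)
  | succ i ih =>
    by_cases hx : w.es i = x
    · have hi := w.mem_ends_succ i
      rw [hx, hab, Sym2.mem_iff] at hi
      rcases hi with hi | hi <;> rw [hi]
      exacts [.inl mem_sideOf_self, .inr mem_sideOf_self]
    · have step {c : V} (h : w.vs i.castSucc ∈ G.sideOf x c) : w.vs i.succ ∈ G.sideOf x c :=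
        mem_sideOf_of_mem_ends h hx (w.mem_ends_castSucc i) (w.mem_ends_succ i)
      exact ih.imp step step

lemma compl_sideOf (hconn : G.Connected) (hab : G.ends x = s(a, b)) (hsep : b ∉ G.sideOf x a) :
    (G.sideOf x a)ᶜ = G.sideOf x b := by
  ext u
  exact ⟨(mem_sideOf_or hconn hab u).resolve_left,
    fun hb ha => hsep (SimpleGraph.Reachable.trans ha (SimpleGraph.Reachable.symm hb))⟩

lemma exists_injective_walk_through (hconn : G.Connected) {u u' : V} (hu : u ∈ G.sideOf x a)
    (hu' : u' ∉ G.sideOf x a) :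
    ∃ n, ∃ w : G.Walk n, Function.Injective w.vs ∧ (∃ i, w.es i = x) ∧
      w.vs 0 = u ∧ w.vs (Fin.last n) = u' := by
  classical
  obtain ⟨p⟩ := hconn.linkGraph_reachable u u'
  set w := Walk.ofLink p.bypass
  obtain ⟨j, -, hj, hj'⟩ := Fin.exists_crossing_of_not (P := (w.vs · ∈ G.sideOf x a))
    (by simpa [w] using hu) (k := Fin.last _) (by simpa [w] using hu')
  refine ⟨_, w, Walk.injective_ofLink_vs _ p.bypass_isPath, ⟨j, ?_⟩, by simp [w],
    by simp [w]⟩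
  by_contra hx
  exact hj' (mem_sideOf_of_mem_ends hj hx (w.mem_ends_castSucc j) (w.mem_ends_succ j))

def IsHeavy (G : Multigraph V E) (mult : V → ℕ) (v : V) : Prop :=
  G.VertexOnCycle v ∨ 1 < mult v

def branchVerts (G : Multigraph V E) (x : E) (a : V) : Set V := (G.sideOf x a)ᶜ ∪ {a}

def branchEdges (G : Multigraph V E) (x : E) (a : V) : Set E :=
  {e | ∃ p ∈ G.ends e, p ∉ G.sideOf x a}

lemma mem_branchEdges (hab : G.ends x = s(a, b)) (hsep : b ∉ G.sideOf x a) :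
    x ∈ G.branchEdges x a :=
  ⟨b, hab ▸ Sym2.mem_mk_right a b, hsep⟩

lemma mem_branchVerts_of_mem_ends (hab : G.ends x = s(a, b)) {e : E} {p : V}
    (he : e ∈ G.branchEdges x a) (hp : p ∈ G.ends e) : p ∈ G.branchVerts x a := by
  obtain ⟨q, hq, hqA⟩ := he
  by_cases hpA : p ∈ G.sideOf x a
  · right
    obtain rfl : e = x := by
      by_contra hex
      exact hqA (mem_sideOf_of_mem_ends hpA hex hp hq)
    rw [hab, Sym2.mem_iff] at hp hq
    rcases hq with rfl | rfl
    · exact absurd mem_sideOf_self hqA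
    · exact hp.resolve_right fun h => hqA (h ▸ hpA)
  · exact .inl hpA

lemma subConnected_branch (hconn : G.Connected) (hab : G.ends x = s(a, b))
    (hsep : b ∉ G.sideOf x a) : G.SubConnected (G.branchVerts x a) (G.branchEdges x a) := by
  refine subConnected_iff.2 ⟨fun e he p hp => mem_branchVerts_of_mem_ends hab he hp, ?_⟩
  suffices ∀ u ∈ G.branchVerts x a, (G.linkGraph (G.branchEdges x a)).Reachable b u from
    fun u hu v hv => (this u hu).symm.trans (this v hv)
  rintro u (hu | rfl)
  · rw [compl_sideOf hconn hab hsep] at hu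
    refine (hu.mem_and_reachable_of_forall_adj (S := (G.sideOf x a)ᶜ) ?_ hsep).2
    rintro v w ⟨hvw, e, he, hends⟩ hv
    have hve : v ∈ G.ends e := hends ▸ Sym2.mem_mk_left v w
    have hwe : w ∈ G.ends e := hends ▸ Sym2.mem_mk_right v w
    exact ⟨fun hw => hv (mem_sideOf_of_mem_ends hw he hwe hve), hvw, e, ⟨v, hve, hv⟩, hends⟩
  · exact linkGraph_reachable_of_mem_ends (mem_branchEdges hab hsep)
      (hab ▸ Sym2.mem_mk_right _ _) (hab ▸ Sym2.mem_mk_left _ _)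

lemma not_mem_branchEdges_of_isCycleWalk (hcyc : ∀ u, G.VertexOnCycle u → u ∈ G.sideOf x a)
    {w : G.Walk n} (hw : G.IsCycleWalk w) (i : Fin n) : w.es i ∉ G.branchEdges x a :=
  fun ⟨_, hp, hpA⟩ => hpA (hcyc _ (hw.vertexOnCycle_of_mem_ends i hp))

lemma sideOf_subset_of_forall_mem_branchEdges (hall : ∀ e, e ∈ G.branchEdges x a) :
    G.sideOf x a ⊆ {a} := by
  intro u hu
  refine (hu.mem_and_reachable_of_forall_adj (G₂ := ⊥) (S := {a}) ?_ rfl).1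
  rintro v w ⟨-, e, he, hends⟩ rfl
  obtain ⟨p, hp, hpA⟩ := hall e
  exact absurd (mem_sideOf_of_mem_ends mem_sideOf_self he (hends ▸ Sym2.mem_mk_left v w) hp) hpA

lemma isBrauerTree_of_forall_mem_branchEdges (hconn : G.Connected)
    (hheavy : ∀ u, G.IsHeavy mult u → u ∈ G.sideOf x a)
    (hall : ∀ e, e ∈ G.branchEdges x a) : G.IsBrauerTree mult := by
  refine ⟨⟨hconn, fun ⟨_, w, hw, _⟩ => ?_⟩, fun u hu v hv => ?_⟩
  · exact not_mem_branchEdges_of_isCycleWalk (fun u h => hheavy u (.inl h)) hw ⟨0, hw.1⟩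
      (hall _)
  · have hA := sideOf_subset_of_forall_mem_branchEdges hall
    rw [hA (hheavy u (.inr hu)), hA (hheavy v (.inr hv))]

lemma mem_sideOf_of_not_mem_branchEdges {e : E} (he : e ∉ G.branchEdges x a) {p : V}
    (hp : p ∈ G.ends e) : p ∈ G.sideOf x a :=
  by_contra fun hpA => he ⟨p, hp, hpA⟩

lemma eq_of_subConnected_compl_branch (hconn : G.Connected) (hnt : ¬ G.IsBrauerTree mult)
    (hheavy : ∀ u, G.IsHeavy mult u → u ∈ G.sideOf x a) {u : V} (hu : u ∈ G.branchVerts x a)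
    (h : G.SubConnected ((G.branchVerts x a)ᶜ ∪ {u}) (G.branchEdges x a)ᶜ) : u = a := by
  by_cases hall : ∀ e, e ∈ G.branchEdges x a
  · exact absurd (isBrauerTree_of_forall_mem_branchEdges hconn hheavy hall) hnt
  push Not at hall
  obtain ⟨e, he⟩ := hall
  obtain ⟨hclosed, hreach⟩ := subConnected_iff.1 h
  have hp := (G.ends e).out_fst_mem
  have huA := ((hreach _ (hclosed e he _ hp) u (.inr rfl)).mem_and_reachable_of_forall_adj
    (G₂ := G.linkGraph _) (S := G.sideOf x a)
    (fun v w hvw _ => by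
      obtain ⟨e', he', hends⟩ := hvw.2
      exact ⟨mem_sideOf_of_not_mem_branchEdges he' (hends ▸ Sym2.mem_mk_right v w), hvw⟩)
    (mem_sideOf_of_not_mem_branchEdges he hp)).1
  exact hu.resolve_left (not_not.2 huA)

lemma subConnected_compl_branch :
    G.SubConnected ((G.branchVerts x a)ᶜ ∪ {a}) (G.branchEdges x a)ᶜ := by
  have hVS : (G.branchVerts x a)ᶜ ∪ {a} = G.sideOf x a := by
    ext u
    by_cases hua : u = a
    · simp [hua, branchVerts, mem_sideOf_self]
    · simp [hua, branchVerts]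
  rw [hVS, subConnected_iff]
  refine ⟨fun e he p hp => mem_sideOf_of_not_mem_branchEdges he hp, ?_⟩
  suffices ∀ u ∈ G.sideOf x a, (G.linkGraph (G.branchEdges x a)ᶜ).Reachable a u from
    fun u hu v hv => (this u hu).symm.trans (this v hv)
  intro u hu
  refine (hu.mem_and_reachable_of_forall_adj (S := G.sideOf x a) ?_ mem_sideOf_self).2
  rintro v w ⟨hvw, e, he, hends⟩ hv
  have hside {p : V} (hp : p ∈ G.ends e) : p ∈ G.sideOf x a :=
    mem_sideOf_of_mem_ends hv he (hends ▸ Sym2.mem_mk_left v w) hp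
  exact ⟨hside (hends ▸ Sym2.mem_mk_right v w), hvw, e, fun ⟨_, hp, hpA⟩ => hpA (hside hp),
    hends⟩

lemma exceptionalEdge_of_forall_isHeavy_mem_sideOf (hmult : ∀ v, 1 ≤ mult v)
    (hconn : G.Connected) (hnt : ¬ G.IsBrauerTree mult) (hab : G.ends x = s(a, b))
    (hsep : b ∉ G.sideOf x a) (hheavy : ∀ u, G.IsHeavy mult u → u ∈ G.sideOf x a) :
    G.ExceptionalEdge mult x := by
  have hlight {u : V} (hu : u ∈ G.branchVerts x a) (hua : u ≠ a) : ¬ G.IsHeavy mult u :=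
    fun h => hu.elim (· (hheavy u h)) hua
  refine ⟨{
      VS := G.branchVerts x a
      ES := G.branchEdges x a
      v := a
      v_mem := .inr rfl
      tree := ⟨subConnected_branch hconn hab hsep, fun ⟨_, w, hw, hsub⟩ =>
        not_mem_branchEdges_of_isCycleWalk (fun u h => hheavy u (.inl h)) hw _
          (hsub.2 ⟨0, hw.1⟩)⟩
      compl_conn := subConnected_compl_branch
      v_unique := fun u hu h => eq_of_subConnected_compl_branch hconn hnt hheavy hu h
      cycles := fun u hu hc => by_contra fun hua => hlight hu hua (.inl hc)
      mult_one := fun u hu hua => ?_ }, mem_branchEdges hab hsep⟩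
  have := hmult u
  have := hlight hu hua
  simp only [IsHeavy, not_or] at this
  omega

def EdgeOnHeavyPath (G : Multigraph V E) (mult : V → ℕ) (x : E) : Prop :=
  ∃ n, ∃ w : G.Walk n, Function.Injective w.vs ∧ (∃ i, w.es i = x) ∧
    G.IsHeavy mult (w.vs 0) ∧ G.IsHeavy mult (w.vs (Fin.last n))

lemma edgeOnHeavyPath_iff : G.EdgeOnHeavyPath mult x ↔
    ∃ n, ∃ w : G.Walk n, Function.Injective w.vs ∧ (∃ i, w.es i = x) ∧
      ((G.VertexOnCycle (w.vs 0) ∧ G.VertexOnCycle (w.vs (Fin.last n))) ∨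
       (G.VertexOnCycle (w.vs 0) ∧ 1 < mult (w.vs (Fin.last n))) ∨
       (1 < mult (w.vs 0) ∧ 1 < mult (w.vs (Fin.last n)))) := by
  constructor
  · rintro ⟨n, w, hinj, hx, hc0 | hm0, hcl | hml⟩
    · exact ⟨n, w, hinj, hx, .inl ⟨hc0, hcl⟩⟩
    · exact ⟨n, w, hinj, hx, .inr (.inl ⟨hc0, hml⟩)⟩
    · obtain ⟨i, rfl⟩ := hx
      exact ⟨n, w.reverse, hinj.comp Fin.rev_injective, ⟨i.rev, by simp⟩,
        .inr (.inl ⟨by simpa using hcl, by simpa using hm0⟩)⟩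
    · exact ⟨n, w, hinj, hx, .inr (.inr ⟨hm0, hml⟩)⟩
  · rintro ⟨n, w, hinj, hx, ⟨h0, hl⟩ | ⟨h0, hl⟩ | ⟨h0, hl⟩⟩
    exacts [⟨n, w, hinj, hx, .inl h0, .inl hl⟩, ⟨n, w, hinj, hx, .inl h0, .inr hl⟩,
      ⟨n, w, hinj, hx, .inr h0, .inr hl⟩]

namespace ExcSubtree

variable (T : G.ExcSubtree mult)

lemma eq_v_of_isHeavy {u : V} (hu : u ∈ T.VS) (h : G.IsHeavy mult u) : u = T.v :=
  h.elim (T.cycles u hu) fun hm => by_contra fun hne => by have := T.mult_one u hu hne; omega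

lemma exists_vs_eq_v_of_es_mem (w : G.Walk n) (h0 : G.IsHeavy mult (w.vs 0)) {i : Fin n}
    (hi : w.es i ∈ T.ES) : ∃ k ≤ i.castSucc, w.vs k = T.v := by
  by_cases h0T : w.vs 0 ∈ T.VS
  · exact ⟨0, Fin.zero_le _, T.eq_v_of_isHeavy h0T h0⟩
  have hiT : w.vs i.castSucc ∈ T.VS := T.tree.1.1 _ hi _ (w.mem_ends_castSucc i)
  obtain ⟨j, hj, hjT, hjT'⟩ :=
    Fin.exists_crossing_of_not (P := (w.vs · ∉ T.VS)) h0T (not_not.2 hiT)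
  have hjE : w.es j ∉ T.ES := fun h => hjT (T.tree.1.1 _ h _ (w.mem_ends_castSucc j))
  exact ⟨j.succ, hj, (T.compl_conn.1 _ hjE _ (w.mem_ends_succ j)).resolve_left hjT'⟩

end ExcSubtree

lemma not_exceptionalEdge_of_edgeOnCycle (h : G.EdgeOnCycle x) : ¬ G.ExceptionalEdge mult x := by
  rintro ⟨T, hxT⟩
  obtain ⟨n, w, hw, i, rfl⟩ := h
  have hv {p : V} (hp : p ∈ G.ends (w.es i)) : p = T.v :=
    T.cycles p (T.tree.1.1 _ hxT p hp) (hw.vertexOnCycle_of_mem_ends i hp)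
  have hloop : G.ends (w.es i) = s(T.v, T.v) := by
    rw [w.ok i, hv (w.mem_ends_castSucc i), hv (w.mem_ends_succ i)]
  have hcyc := Walk.isCycleWalk_cons (w := Walk.nil T.v)
    (fun i j _ => Subsingleton.elim (α := Fin 1) i j) (fun k => k.elim0) hloop
  refine T.tree.2 ⟨1, _, hcyc, fun k => ?_, fun k => ?_⟩
  · cases k using Fin.cases <;> exact T.v_mem
  · cases k using Fin.cases with
    | zero => exact hxT
    | succ k => exact k.elim0

lemma not_exceptionalEdge_of_edgeOnHeavyPath (h : G.EdgeOnHeavyPath mult x) :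
    ¬ G.ExceptionalEdge mult x := by
  rintro ⟨T, hxT⟩
  obtain ⟨n, w, hinj, ⟨i, rfl⟩, h0, hl⟩ := h
  obtain ⟨k, hk, hkv⟩ := T.exists_vs_eq_v_of_es_mem w h0 hxT
  obtain ⟨k', hk', hk'v⟩ :=
    T.exists_vs_eq_v_of_es_mem w.reverse (by simpa using hl) (i := i.rev) (by simpa using hxT)
  obtain rfl : k = k'.rev := hinj (hkv.trans hk'v.symm)
  rw [Fin.le_def] at hk hk'
  simp only [Fin.val_rev, Fin.val_castSucc] at hk hk'
  omega

lemma exceptionalEdge_of_not_edgeOnCycle (hmult : ∀ v, 1 ≤ mult v) (hconn : G.Connected)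
    (hnt : ¬ G.IsBrauerTree mult) (hc : ¬ G.EdgeOnCycle x) (hp : ¬ G.EdgeOnHeavyPath mult x) :
    G.ExceptionalEdge mult x := by
  obtain ⟨a, b, hab⟩ : ∃ a b, G.ends x = s(a, b) := ⟨_, _, (Quot.out_eq (G.ends x)).symm⟩
  have hsep : b ∉ G.sideOf x a := fun h => hc (edgeOnCycle_of_linkGraph_reachable hab h.symm)
  by_cases hheavy : ∀ u, G.IsHeavy mult u → u ∈ G.sideOf x a
  · exact exceptionalEdge_of_forall_isHeavy_mem_sideOf hmult hconn hnt hab hsep hheavy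
  push Not at hheavy
  obtain ⟨u', hu'h, hu'⟩ := hheavy
  refine exceptionalEdge_of_forall_isHeavy_mem_sideOf hmult hconn hnt (hab.trans Sym2.eq_swap)
    (fun h => hsep h.symm) fun u hu => ?_
  rw [← compl_sideOf hconn hab hsep]
  intro huA
  obtain ⟨n, w, hinj, hx, rfl, rfl⟩ := exists_injective_walk_through hconn huA hu'
  exact hp ⟨n, w, hinj, hx, hu, hu'h⟩

end Multigraph

open Multigraph

theorem nonexceptional_edge_characterisation_general
    (V E : Type) (G : Multigraph V E) (mult : V → ℕ)
    (hmult : ∀ v, 1 ≤ mult v) (hconn : G.Connected)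
    (hnt : ¬ G.IsBrauerTree mult) (x : E) :
    ¬ G.ExceptionalEdge mult x ↔
      (G.EdgeOnCycle x ∨
        ∃ n, ∃ w : G.Walk n, Function.Injective w.vs ∧ (∃ i, w.es i = x) ∧
          ((G.VertexOnCycle (w.vs 0) ∧ G.VertexOnCycle (w.vs (Fin.last n))) ∨
           (G.VertexOnCycle (w.vs 0) ∧ 1 < mult (w.vs (Fin.last n))) ∨
           (1 < mult (w.vs 0) ∧ 1 < mult (w.vs (Fin.last n))))) := by
  rw [← edgeOnHeavyPath_iff]
  refine ⟨fun hx => ?_, ?_⟩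
  · by_contra h
    push Not at h
    exact hx (exceptionalEdge_of_not_edgeOnCycle hmult hconn hnt h.1 h.2)
  · rintro (h | h)
    exacts [not_exceptionalEdge_of_edgeOnCycle h, not_exceptionalEdge_of_edgeOnHeavyPath h]

/-- In a finite connected Brauer graph `G` (not a Brauer tree), an
edge `x` is non-exceptional iff `x` belongs to a cycle of `G`, or lies on a simple
path between two vertices each lying on a cycle, or on a simple path between a
vertex on a cycle and a vertex of multiplicity greater than `1`, or on a simple
path between two vertices of multiplicity greater than `1`. -/
theorem nonexceptional_edge_characterisation
    (V E : Type) [Fintype V] [Fintype E] (G : Multigraph V E) (mult : V → ℕ)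
    (hmult : ∀ v, 1 ≤ mult v) (hconn : G.Connected)
    (hnt : ¬ G.IsBrauerTree mult) (x : E) :
    ¬ G.ExceptionalEdge mult x ↔
      (G.EdgeOnCycle x ∨
        ∃ n, ∃ w : G.Walk n, Function.Injective w.vs ∧ (∃ i, w.es i = x) ∧
          ((G.VertexOnCycle (w.vs 0) ∧ G.VertexOnCycle (w.vs (Fin.last n))) ∨
           (G.VertexOnCycle (w.vs 0) ∧ 1 < mult (w.vs (Fin.last n))) ∨
           (1 < mult (w.vs 0) ∧ 1 < mult (w.vs (Fin.last n))))) :=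
  nonexceptional_edge_characterisation_general V E G mult hmult hconn hnt x
end

section
/- In a finite connected Brauer graph with at least two non-exceptional edges, every non-exceptional edge x shares a vertex with some other non-exceptional edge y. -/
open Multigraph

/-- In a finite connected Brauer graph (not a Brauer tree) with at
least two non-exceptional edges, every non-exceptional edge `x` shares a vertex with
some other non-exceptional edge `y`. -/
theorem nonexceptional_edges_connected
    (V E : Type) [Fintype V] [Fintype E] (G : Multigraph V E) (mult : V → ℕ)
    (hmult : ∀ v, 1 ≤ mult v) (hconn : G.Connected)
    (hnt : ¬ G.IsBrauerTree mult)
    (htwo : ∃ e f : E, e ≠ f ∧ ¬ G.ExceptionalEdge mult e ∧ ¬ G.ExceptionalEdge mult f)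
    (x : E) (hx : ¬ G.ExceptionalEdge mult x) :
    ∃ y : E, y ≠ x ∧ ¬ G.ExceptionalEdge mult y ∧
      ∃ v : V, v ∈ G.ends x ∧ v ∈ G.ends y := by
  by_contra hcon
  push_neg at hcon
  -- hcon : ∀ y, y ≠ x → ¬Exc y → ∀ v ∈ ends x, v ∉ ends y
  obtain ⟨e₀, f₀, hef, he₀, hf₀⟩ := htwo
  -- pick a non-exceptional edge g ≠ x
  obtain ⟨g, hgx, hg⟩ : ∃ g : E, g ≠ x ∧ ¬ G.ExceptionalEdge mult g := by
    by_cases h : e₀ = x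
    · exact ⟨f₀, by rintro rfl; exact hef h, hf₀⟩
    · exact ⟨e₀, h, he₀⟩
  set P : V → Prop := fun u =>
    u ∈ G.ends x ∨ ∃ T : G.ExcSubtree mult, T.v ∈ G.ends x ∧ u ∈ T.VS with hP
  have hA : ∀ u u' e, G.ends e = s(u, u') → u ∈ G.ends x → P u' := by
    intro u u' e he hu
    by_cases hex : e = x
    · subst hex
      exact Or.inl (he ▸ Sym2.mem_mk_right u u')
    · have hue : u ∈ G.ends e := he ▸ Sym2.mem_mk_left u u'
      by_cases hexc : G.ExceptionalEdge mult e
      · obtain ⟨T, heT⟩ := hexc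
        have huVS : u ∈ T.VS := T.tree.1.1 e heT u hue
        have hxES : x ∈ T.ESᶜ := by
          intro hxT
          exact hx ⟨T, hxT⟩
        have : u ∈ T.VSᶜ ∪ {T.v} := T.compl_conn.1 x hxES u hu
        have huv : u = T.v := by
          rcases this with h | h
          · exact absurd huVS h
          · exact h
        have hu'VS : u' ∈ T.VS := T.tree.1.1 e heT u' (he ▸ Sym2.mem_mk_right u u')
        exact Or.inr ⟨T, huv ▸ hu, hu'VS⟩
      · exact absurd hue (hcon e hex hexc u hu)
  have step : ∀ u u' e, G.ends e = s(u, u') → P u → P u' := by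
    intro u u' e he hu
    rcases hu with hu | ⟨T, hTv, huVS⟩
    · exact hA u u' e he hu
    · by_cases heT : e ∈ T.ES
      · exact Or.inr ⟨T, hTv, T.tree.1.1 e heT u' (he ▸ Sym2.mem_mk_right u u')⟩
      · have hue : u ∈ G.ends e := he ▸ Sym2.mem_mk_left u u'
        have : u ∈ T.VSᶜ ∪ {T.v} := T.compl_conn.1 e heT u hue
        have huv : u = T.v := by
          rcases this with h | h
          · exact absurd huVS h
          · exact h
        exact hA u u' e he (huv ▸ hTv)
  -- endpoints
  obtain ⟨a, ha⟩ : ∃ a, a ∈ G.ends x := by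
    induction G.ends x using Sym2.ind with
    | _ p q => exact ⟨p, Sym2.mem_mk_left p q⟩
  obtain ⟨c, hc⟩ : ∃ c, c ∈ G.ends g := by
    induction G.ends g using Sym2.ind with
    | _ p q => exact ⟨p, Sym2.mem_mk_left p q⟩
  -- walk from a to c
  obtain ⟨n, w, _, hw0, hwl⟩ := hconn.2 a (Set.mem_univ a) c (Set.mem_univ c)
  have hall : ∀ i : Fin (n + 1), P (w.vs i) := by
    intro i
    induction i using Fin.induction with
    | zero => exact hw0 ▸ Or.inl ha
    | succ i ih => exact step _ _ _ (w.ok i) ih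
  have hPc : P c := hwl ▸ hall (Fin.last n)
  rcases hPc with hcx | ⟨T, hTv, hcVS⟩
  · exact hcon g hgx hg c hcx hc
  · have hgES : g ∈ T.ESᶜ := fun hgT => hg ⟨T, hgT⟩
    have : c ∈ T.VSᶜ ∪ {T.v} := T.compl_conn.1 g hgES c hc
    have hcv : c = T.v := by
      rcases this with h | h
      · exact absurd hcVS h
      · exact h
    exact hcon g hgx hg c (hcv ▸ hTv) hc
end
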